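/- arXiv:2407.08212 — 7 statements merged into one kernel-verified Lean document; each statement's English description precedes it below -/
import Mathlib

section
/- Let μ be a Radon outer measure on ℝ^n. If there exist C, q, r̄ > 0 with q > n and (1/C) r^q ≤ μ(B_r(x)) ≤ C r^q for all x ∈ spt μ and r ∈ (0, r̄), then spt μ = ∅. -/
open MeasureTheory Metric Filter Set Topology

noncomputable section

/-- The support of a measure `μ` on `ℝ^n`: points all of whose balls have positive measure. -/
def spt {n : ℕ} (μ : Measure (EuclideanSpace ℝ (Fin n))) : Set (EuclideanSpace ℝ (Fin n)) :=
  {x | ∀ r : ℝ, 0 < r → 0 < μ (Metric.ball x r)}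

/-- The set of `h`-superdensity points of `E` with respect to `μ`. -/
def sdp {n : ℕ} (μ : Measure (EuclideanSpace ℝ (Fin n))) (h : ℝ)
    (E : Set (EuclideanSpace ℝ (Fin n))) : Set (EuclideanSpace ℝ (Fin n)) :=
  {x | x ∈ spt μ ∧
    Filter.Tendsto
      (fun r : ℝ => μ (Metric.ball x r \ E) / (μ (Metric.ball x r) * ENNReal.ofReal (r ^ h)))
      (nhdsWithin 0 (Set.Ioi 0)) (nhds 0)}

/-- The base operator `b^{μ,h}` associated to `μ` and `h`. -/
def baseOp {n : ℕ} (μ : Measure (EuclideanSpace ℝ (Fin n))) (h : ℝ)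
    (A : Set (EuclideanSpace ℝ (Fin n))) : Set (EuclideanSpace ℝ (Fin n)) :=
  {x | x ∈ spt μ ∧
    0 < Filter.limsup
      (fun r : ℝ => μ (Metric.ball x r ∩ A) / (μ (Metric.ball x r) * ENNReal.ofReal (r ^ h)))
      (nhdsWithin 0 (Set.Ioi 0))}

theorem stmt_11 {n : ℕ} (μ : Measure (EuclideanSpace ℝ (Fin n)))
    [IsLocallyFiniteMeasure μ] [μ.Regular]
    (C q rbar : ℝ) (hC : 0 < C) (hq : (n : ℝ) < q) (hrbar : 0 < rbar)
    (hbound : ∀ x ∈ spt μ, ∀ r : ℝ, 0 < r → r < rbar →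
      ENNReal.ofReal (r ^ q / C) ≤ μ (Metric.ball x r) ∧
        μ (Metric.ball x r) ≤ ENNReal.ofReal (C * r ^ q)) :
    spt μ = ∅ := by
  -- Notation and basic facts
  have hn : (0:ℝ) ≤ n := Nat.cast_nonneg n
  set d : ℝ := ((n : ℝ) + q) / 2 with hd_def
  have hnd : (n : ℝ) < d := by rw [hd_def]; linarith
  have hdq : d < q := by rw [hd_def]; linarith
  have hd_pos : 0 < d := lt_of_le_of_lt hn hnd
  have hδ : 0 < q - d := by linarith
  -- the support is closed
  have hclosed : IsClosed (spt μ) := by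
    rw [← isOpen_compl_iff, Metric.isOpen_iff]
    intro x hx
    simp only [mem_compl_iff, spt, mem_setOf_eq, not_forall] at hx
    obtain ⟨r, hr, hr0⟩ := hx
    refine ⟨r / 2, by linarith, fun y hy => ?_⟩
    have hsub : Metric.ball y (r / 2) ⊆ Metric.ball x r := by
      apply Metric.ball_subset_ball'
      rw [mem_ball] at hy
      linarith
    intro hy'
    have := hy' (r / 2) (by linarith)
    have h0 : μ (Metric.ball y (r / 2)) = 0 := by
      have : μ (Metric.ball y (r / 2)) ≤ μ (Metric.ball x r) := measure_mono hsub
      have h2 : μ (Metric.ball x r) = 0 := by simpa using hr0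
      simpa [h2] using this
    simp [h0] at this
  -- the complement of the support is null
  have hcompl : μ (spt μ)ᶜ = 0 := by
    apply measure_null_of_locally_null
    intro x hx
    simp only [mem_compl_iff, spt, mem_setOf_eq, not_forall] at hx
    obtain ⟨r, hr, hr0⟩ := hx
    have h0 : μ (Metric.ball x r) = 0 := by simpa using hr0
    exact ⟨Metric.ball x r, mem_nhdsWithin_of_mem_nhds (Metric.ball_mem_nhds x hr), h0⟩
  -- μ of any singleton is zero
  have hsingle : ∀ x ∈ spt μ, μ {x} = 0 := by
    intro x hx
    have htend : Tendsto (fun r : ℝ => ENNReal.ofReal (C * r ^ q)) (𝓝[>] (0:ℝ)) (𝓝 0) := by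
      have h1 : Tendsto (fun r : ℝ => r ^ q) (𝓝 (0:ℝ)) (𝓝 0) := by
        have := (Real.continuousAt_rpow_const 0 q (Or.inr (le_of_lt (lt_of_le_of_lt hn hq)))).tendsto
        simpa [Real.zero_rpow (ne_of_gt (lt_of_le_of_lt hn hq))] using this
      have h2 := h1.const_mul C
      rw [mul_zero] at h2
      have h3 := (ENNReal.continuous_ofReal.tendsto 0).comp h2
      simp only [Function.comp_def, ENNReal.ofReal_zero] at h3
      exact h3.mono_left nhdsWithin_le_nhds
    refine le_antisymm ?_ zero_le
    refine ge_of_tendsto htend ?_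
    filter_upwards [Ioo_mem_nhdsGT_of_mem ⟨le_refl (0:ℝ), hrbar⟩] with r hr
    calc μ {x} ≤ μ (Metric.ball x r) := measure_mono (by simp [hr.1])
    _ ≤ ENNReal.ofReal (C * r ^ q) := (hbound x hx r hr.1 hr.2).2
  -- choose a smallness scale
  set K : ℝ := C * 2 ^ q with hK_def
  have hK : 0 < K := by
    apply mul_pos hC
    exact Real.rpow_pos_of_pos (by norm_num) q
  set ε : ℝ := min (rbar / 4) ((1 / K) ^ (1 / (q - d))) with hε_def
  have hε_pos : 0 < ε := by
    apply lt_min (by linarith)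
    exact Real.rpow_pos_of_pos (by positivity) _
  -- the restricted measure is bounded by the d-Hausdorff measure
  have hrestrict : μ.restrict (spt μ) ≤ μH[d] := by
    apply MeasureTheory.Measure.le_hausdorffMeasure d _ (ENNReal.ofReal ε)
      (by simpa using hε_pos)
    intro s hs
    rw [Measure.restrict_apply' hclosed.measurableSet]
    rcases Set.eq_empty_or_nonempty (s ∩ spt μ) with he | ⟨x, hxs, hxspt⟩
    · simp [he]
    have hdiam_lt : EMetric.diam s < ⊤ :=
      lt_of_le_of_lt hs (by simp)
    set r : ℝ := Metric.diam s with hr_def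
    have hr_nonneg : 0 ≤ r := Metric.diam_nonneg
    have hediam : EMetric.diam s = ENNReal.ofReal r := by
      rw [hr_def, Metric.diam]; exact (ENNReal.ofReal_toReal hdiam_lt.ne).symm
    have hrε : r ≤ ε := by
      have : EMetric.diam s ≤ ENNReal.ofReal ε := hs
      rw [hediam, ENNReal.ofReal_le_ofReal_iff (le_of_lt hε_pos)] at this
      exact this
    rcases eq_or_lt_of_le hr_nonneg with hr0 | hr_pos
    · -- diameter zero: s is contained in a point
      have hsub : s ⊆ {x} := by
        intro y hy
        have : dist y x ≤ r := Metric.dist_le_diam_of_mem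
          ((Metric.isBounded_iff_ediam_ne_top.2 hdiam_lt.ne)) hy hxs
        simp only [mem_singleton_iff]
        rw [← hr0] at this
        exact dist_le_zero.mp this
      have : μ (s ∩ spt μ) = 0 :=
        measure_mono_null (Set.inter_subset_left.trans hsub) (hsingle x hxspt)
      simp [this]
    · -- positive diameter
      have hsub : s ⊆ Metric.ball x (2 * r) := by
        intro y hy
        have : dist y x ≤ r := Metric.dist_le_diam_of_mem
          ((Metric.isBounded_iff_ediam_ne_top.2 hdiam_lt.ne)) hy hxs
        rw [mem_ball]; linarith
      have h2r_pos : 0 < 2 * r := by linarith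
      have h2r_lt : 2 * r < rbar := by
        have : r ≤ rbar / 4 := le_trans hrε (min_le_left _ _)
        linarith
      have hball := (hbound x hxspt (2 * r) h2r_pos h2r_lt).2
      have hkey : C * (2 * r) ^ q ≤ r ^ d := by
        have h1 : (2 * r) ^ q = 2 ^ q * r ^ q :=
          Real.mul_rpow (by norm_num) hr_nonneg
        have h2 : r ^ q = r ^ (q - d) * r ^ d := by
          rw [← Real.rpow_add hr_pos]; ring_nf
        have h3 : K * r ^ (q - d) ≤ 1 := by
          have hrle : r ^ (q - d) ≤ ((1 / K) ^ (1 / (q - d))) ^ (q - d) := by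
            apply Real.rpow_le_rpow hr_nonneg (le_trans hrε (min_le_right _ _)) (le_of_lt hδ)
          have heq : ((1 / K) ^ (1 / (q - d))) ^ (q - d) = 1 / K := by
            rw [← Real.rpow_mul (by positivity)]
            simp only [one_div]
            rw [inv_mul_cancel₀ (ne_of_gt hδ), Real.rpow_one]
          rw [heq] at hrle
          calc K * r ^ (q - d) ≤ K * (1 / K) := by
                exact mul_le_mul_of_nonneg_left hrle (le_of_lt hK)
          _ = 1 := by field_simp
        calc C * (2 * r) ^ q = K * r ^ (q - d) * r ^ d := by
              rw [h1, h2, hK_def]; ring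
        _ ≤ 1 * r ^ d := by
              apply mul_le_mul_of_nonneg_right h3 (Real.rpow_nonneg hr_nonneg d)
        _ = r ^ d := one_mul _
      calc μ (s ∩ spt μ) ≤ μ (Metric.ball x (2 * r)) :=
            measure_mono (Set.inter_subset_left.trans hsub)
      _ ≤ ENNReal.ofReal (C * (2 * r) ^ q) := hball
      _ ≤ ENNReal.ofReal (r ^ d) := ENNReal.ofReal_le_ofReal hkey
      _ = ENNReal.ofReal r ^ d := (ENNReal.ofReal_rpow_of_pos hr_pos).symm
      _ = EMetric.diam s ^ d := by rw [hediam]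
  -- the support itself is null, by comparing with Hausdorff measure
  have hspt_null : μ (spt μ) = 0 := by
    have h1 : μ (spt μ) = μ.restrict (spt μ) Set.univ := by
      rw [Measure.restrict_apply_univ]
    have h2 : μ.restrict (spt μ) Set.univ ≤ μH[d] Set.univ := hrestrict _
    have hdimH : dimH (Set.univ : Set (EuclideanSpace ℝ (Fin n))) = n := by
      rw [ContinuousLinearEquiv.dimH_univ
        (EuclideanSpace.equiv (Fin n) ℝ : EuclideanSpace ℝ (Fin n) ≃L[ℝ] (Fin n → ℝ))]
      exact Real.dimH_univ_pi_fin n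
    have hdlt : dimH (Set.univ : Set (EuclideanSpace ℝ (Fin n))) < d.toNNReal := by
      rw [hdimH]
      rw [show ((n : ENNReal)) = ((n : NNReal) : ENNReal) by simp]
      rw [ENNReal.coe_lt_coe, ← NNReal.coe_lt_coe]
      rw [Real.coe_toNNReal d (le_of_lt hd_pos)]
      exact hnd
    have h3 := hausdorffMeasure_of_dimH_lt hdlt
    rw [Real.coe_toNNReal d (le_of_lt hd_pos)] at h3
    refine le_antisymm ?_ zero_le
    rw [h1]
    calc μ.restrict (spt μ) Set.univ ≤ μH[d] Set.univ := h2
    _ = 0 := h3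
  -- conclude
  ext x
  simp only [mem_empty_iff_false, iff_false]
  intro hx
  have h1 : 0 < μ (Metric.ball x 1) := hx 1 one_pos
  have h2 : μ (Metric.ball x 1) ≤ μ (spt μ) + μ (spt μ)ᶜ := by
    calc μ (Metric.ball x 1) ≤ μ (spt μ ∪ (spt μ)ᶜ) := measure_mono (by simp)
    _ ≤ μ (spt μ) + μ (spt μ)ᶜ := measure_union_le _ _
  rw [hspt_null, hcompl] at h2
  simp at h2
  rw [h2] at h1
  exact lt_irrefl 0 h1
end
end

section
/- Let μ be a nontrivial Radon outer measure on ℝ^n satisfying r^p/C ≤ μ(B_r(x)) ≤ C r^q for all x ∈ spt μ, r ∈ (0, r̄), with q ≤ min{n, p}. Then for every ε > 0, every h > np/q − q, and every nonempty bounded open Ω ⊂ ℝ^n, there exists an open set A ⊂ Ω with μ(A) < ε and Ω ∩ spt μ ⊂ b^{μ,h}(A) ⊂ closure(Ω) ∩ spt μ. -/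
open MeasureTheory Metric Filter Set Topology

noncomputable section

open Module
open scoped ENNReal NNReal

/-!
Fix an exponent `t` with `n / q < t < (q + h) / p` and scales `r k → 0`. At scale `r k` take a
maximal `r k`-separated net of the points of `spt μ` lying `r k`-deep in `Ω`, and let `A` be the
union of the balls of radius `(r k) ^ t` around all net points. By volume packing the net has
`O((r k) ^ (-n))` points and each of its balls has measure `≤ C (r k) ^ (t q)`, so
`μ A ≤ ∑ O((r k) ^ (t q - n))`, which is as small as we like because `t q > n`. Conversely every
`x ∈ Ω ∩ spt μ` lies within `r k` of a net point `g`, so `B(x, 2 r k) ∩ A ⊇ B(g, (r k) ^ t)` has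
measure `≥ (r k) ^ (t p) / C ≥ (r k) ^ (q + h) / C`, while `μ (B(x, 2 r k)) (2 r k) ^ h` is at most
`C (2 r k) ^ (q + h)`: the density ratio stays above `(C ^ 2 2 ^ (q + h))⁻¹` along these radii.
-/

lemma TotallyBounded.exists_finset_separated_cover {X : Type*} [PseudoMetricSpace X] {S : Set X}
    (hS : TotallyBounded S) {δ : ℝ} (hδ : 0 < δ) :
    ∃ G : Finset X, ↑G ⊆ S ∧ (G : Set X).Pairwise (fun a b => δ < dist a b) ∧
      ∀ y ∈ S, ∃ g ∈ G, dist y g ≤ δ := by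
  set ε : ℝ≥0 := δ.toNNReal
  have hε : ε / 2 ≠ 0 := by positivity
  have hpack : packingNumber ε S ≠ ⊤ := by
    obtain ⟨N, -, hNfin, hN⟩ := exists_finite_isCover_of_totallyBounded hε hS
    have := (packingNumber_two_mul_le_externalCoveringNumber (ε / 2) S).trans
      hN.externalCoveringNumber_le_encard
    rw [mul_div_cancel₀ _ two_ne_zero] at this
    exact (this.trans_lt hNfin.encard_lt_top).ne
  have hfin : (maximalSeparatedSet ε S).Finite := by
    rw [← Set.encard_ne_top_iff, encard_maximalSeparatedSet hpack]; exact hpack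
  refine ⟨hfin.toFinset, by simpa using maximalSeparatedSet_subset, ?_, ?_⟩
  · intro a ha b hb hab
    rw [← ENNReal.ofReal_lt_ofReal_iff_of_nonneg hδ.le, ← edist_dist]
    exact isSeparated_maximalSeparatedSet (by simpa using ha) (by simpa using hb) hab
  · intro y hy
    obtain ⟨g, hg, hyg⟩ := isCover_maximalSeparatedSet hpack hy
    refine ⟨g, by simpa using hg, ?_⟩
    rw [← ENNReal.ofReal_le_ofReal_iff hδ.le, ← edist_dist]
    exact hyg

lemma Finset.card_mul_pow_finrank_le_of_le_dist {E : Type*} [NormedAddCommGroup E]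
    [NormedSpace ℝ E] [FiniteDimensional ℝ E] {G : Finset E} {x : E} {R δ : ℝ}
    (hR : 0 ≤ R) (hδ : 0 < δ) (hG : ↑G ⊆ ball x R)
    (hsep : (G : Set E).Pairwise (fun a b => δ ≤ dist a b)) :
    (G.card : ℝ) * δ ^ finrank ℝ E ≤ (2 * R + δ) ^ finrank ℝ E := by
  borelize E
  set μ : Measure E := Measure.addHaar
  have hδ2 : 0 < δ / 2 := half_pos hδ
  have hdisj : (G : Set E).PairwiseDisjoint (fun g => ball g (δ / 2)) :=
    fun a ha b hb hab => ball_disjoint_ball (by linarith [hsep ha hb hab])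
  have hunion : (⋃ g ∈ G, ball g (δ / 2)) ⊆ ball x (R + δ / 2) :=
    iUnion₂_subset fun g hg => ball_subset_ball' (by linarith [mem_ball.1 (hG hg)])
  have hvol : (G.card : ℝ≥0∞) * ENNReal.ofReal ((δ / 2) ^ finrank ℝ E) * μ (ball 0 1) ≤
      ENNReal.ofReal ((R + δ / 2) ^ finrank ℝ E) * μ (ball 0 1) :=
    calc (G.card : ℝ≥0∞) * ENNReal.ofReal ((δ / 2) ^ finrank ℝ E) * μ (ball 0 1)
        = ∑ g ∈ G, μ (ball g (δ / 2)) := by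
          simp only [μ.addHaar_ball_of_pos _ hδ2, Finset.sum_const, nsmul_eq_mul, mul_assoc]
      _ = μ (⋃ g ∈ G, ball g (δ / 2)) :=
          (measure_biUnion_finset hdisj fun _ _ => measurableSet_ball).symm
      _ ≤ μ (ball x (R + δ / 2)) := measure_mono hunion
      _ = ENNReal.ofReal ((R + δ / 2) ^ finrank ℝ E) * μ (ball 0 1) :=
          μ.addHaar_ball_of_pos _ (by positivity)
  have hreal : (G.card : ℝ) * (δ / 2) ^ finrank ℝ E ≤ (R + δ / 2) ^ finrank ℝ E := by
    rw [ENNReal.mul_le_mul_iff_left (measure_ball_pos μ 0 one_pos).ne' measure_ball_lt_top.ne,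
      ← ENNReal.ofReal_natCast, ← ENNReal.ofReal_mul (by positivity),
      ENNReal.ofReal_le_ofReal_iff (by positivity)] at hvol
    exact hvol
  calc (G.card : ℝ) * δ ^ finrank ℝ E
      = 2 ^ finrank ℝ E * ((G.card : ℝ) * (δ / 2) ^ finrank ℝ E) := by
        rw [div_pow]; field_simp
    _ ≤ 2 ^ finrank ℝ E * (R + δ / 2) ^ finrank ℝ E := by gcongr
    _ = (2 * R + δ) ^ finrank ℝ E := by rw [← mul_pow]; ring_nf

lemma exists_finset_cover_card_mul_pow_finrank_le {E : Type*} [NormedAddCommGroup E]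
    [NormedSpace ℝ E] [FiniteDimensional ℝ E] {S : Set E} {x : E} {R r : ℝ} (hR : 0 ≤ R)
    (hr : 0 < r) (hS : S ⊆ ball x R) :
    ∃ G : Finset E, ↑G ⊆ S ∧ (∀ y ∈ S, ∃ g ∈ G, dist y g ≤ r) ∧
      (G.card : ℝ) * r ^ finrank ℝ E ≤ (2 * R + r) ^ finrank ℝ E := by
  obtain ⟨G, hGS, hsep, hcov⟩ := TotallyBounded.exists_finset_separated_cover
    ((isBounded_ball.subset hS).isCompact_closure.totallyBounded.subset subset_closure) hr
  exact ⟨G, hGS, hcov, Finset.card_mul_pow_finrank_le_of_le_dist hR hr (hGS.trans hS)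
    fun a ha b hb hab => (hsep ha hb hab).le⟩

lemma exists_seq_tendsto_zero_tsum_lt {P : ℝ → Prop} (hP : ∀ᶠ r in 𝓝[>] 0, P r)
    {f : ℝ → ℝ≥0∞} (hf : Tendsto f (𝓝[>] 0) (𝓝 0)) {ε : ℝ≥0∞} (hε : ε ≠ 0) :
    ∃ r : ℕ → ℝ, (∀ k, 0 < r k ∧ P (r k)) ∧ Tendsto r atTop (𝓝 0) ∧ ∑' k, f (r k) < ε := by
  obtain ⟨δ, hδ, hδε⟩ := ENNReal.exists_pos_sum_of_countable' hε ℕ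
  have : ∀ k : ℕ, ∃ r, (0 < r ∧ P r) ∧ r < 1 / (k + 1) ∧ f r < δ k := fun k =>
    ((eventually_mem_nhdsWithin.and hP).and <|
      (eventually_nhdsWithin_of_eventually_nhds (eventually_lt_nhds (by positivity))).and
        (hf.eventually (gt_mem_nhds (hδ k)))).exists
  choose r hr hr_lt hfr using this
  exact ⟨r, hr, squeeze_zero (fun k => (hr k).1.le) (fun k => (hr_lt k).le)
      tendsto_one_div_add_atTop_nhds_zero_nat,
    (ENNReal.tsum_le_tsum fun k => (hfr k).le).trans_lt hδε⟩

section DensityRatio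

variable {n : ℕ} {μ : Measure (EuclideanSpace ℝ (Fin n))}

/-- The quotient whose `limsup` as `r → 0+` defines `baseOp μ h A` at `x`. -/
def densityRatio (μ : Measure (EuclideanSpace ℝ (Fin n))) (h : ℝ)
    (A : Set (EuclideanSpace ℝ (Fin n))) (x : EuclideanSpace ℝ (Fin n)) (r : ℝ) : ℝ≥0∞ :=
  μ (ball x r ∩ A) / (μ (ball x r) * ENNReal.ofReal (r ^ h))

lemma baseOp_subset_closure_inter_spt (h : ℝ) (A : Set (EuclideanSpace ℝ (Fin n))) :
    baseOp μ h A ⊆ closure A ∩ spt μ := by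
  rintro x ⟨hx, hpos⟩
  refine ⟨?_, hx⟩
  by_contra hxA
  obtain ⟨δ, hδ, hδA⟩ := Metric.isOpen_iff.1 isClosed_closure.isOpen_compl x hxA
  have hzero : ∀ᶠ r in 𝓝[>] (0 : ℝ), densityRatio μ h A x r = 0 := by
    filter_upwards [Ioo_mem_nhdsGT hδ] with r hr
    have : ball x r ∩ A = ∅ := eq_empty_of_forall_notMem fun z hz =>
      hδA (ball_subset_ball hr.2.le hz.1) (subset_closure hz.2)
    simp [densityRatio, this]
  exact hpos.ne' ((limsup_congr hzero).trans limsup_const_bot)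

lemma mem_baseOp_of_tendsto {h : ℝ} {c : ℝ≥0∞} {A : Set (EuclideanSpace ℝ (Fin n))}
    {x : EuclideanSpace ℝ (Fin n)} {s : ℕ → ℝ} (hx : x ∈ spt μ) (hs0 : ∀ k, 0 < s k)
    (hs : Tendsto s atTop (𝓝 0)) (hc : 0 < c)
    (hratio : ∀ᶠ k in atTop, c ≤ densityRatio μ h A x (s k)) : x ∈ baseOp μ h A := by
  refine ⟨hx, hc.trans_le (le_limsup_of_frequently_le' ?_)⟩
  have hs' : Tendsto s atTop (𝓝[>] 0) := tendsto_nhdsWithin_iff.2 ⟨hs, .of_forall hs0⟩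
  exact hs'.frequently hratio.frequently

lemma ofReal_le_densityRatio {C p q h r ρ : ℝ} {A : Set (EuclideanSpace ℝ (Fin n))}
    {x g : EuclideanSpace ℝ (Fin n)} (hC : 0 < C) (hρ : 0 < ρ) (hρr : ρ ≤ r)
    (hgx : dist g x ≤ r) (hpow : r ^ (q + h) ≤ ρ ^ p) (hA : ball g ρ ⊆ A)
    (hg : ENNReal.ofReal (ρ ^ p / C) ≤ μ (ball g ρ))
    (hx : μ (ball x (2 * r)) ≤ ENNReal.ofReal (C * (2 * r) ^ q)) :
    ENNReal.ofReal (C ^ 2 * 2 ^ (q + h))⁻¹ ≤ densityRatio μ h A x (2 * r) := by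
  have hr : 0 < r := hρ.trans_le hρr
  have hball : ball g ρ ⊆ ball x (2 * r) := ball_subset_ball' (by linarith)
  have hden : C * (2 * r) ^ q * (2 * r) ^ h = C * (2 ^ (q + h) * r ^ (q + h)) := by
    rw [mul_assoc, ← Real.rpow_add (by positivity), Real.mul_rpow zero_le_two hr.le]
  calc ENNReal.ofReal (C ^ 2 * 2 ^ (q + h))⁻¹
      = ENNReal.ofReal (r ^ (q + h) / C / (C * (2 ^ (q + h) * r ^ (q + h)))) := by
        congr 1; field_simp
    _ ≤ ENNReal.ofReal (ρ ^ p / C / (C * (2 * r) ^ q * (2 * r) ^ h)) := by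
        rw [hden]; gcongr
    _ = ENNReal.ofReal (ρ ^ p / C) /
          (ENNReal.ofReal (C * (2 * r) ^ q) * ENNReal.ofReal ((2 * r) ^ h)) := by
        rw [ENNReal.ofReal_div_of_pos (by positivity), ENNReal.ofReal_mul (by positivity)]
    _ ≤ densityRatio μ h A x (2 * r) :=
        ENNReal.div_le_div (hg.trans (measure_mono (subset_inter hball hA)))
          (mul_le_mul_left hx _)

lemma measure_biUnion_ball_rpow_le {C q rbar R r t : ℝ} {G : Finset (EuclideanSpace ℝ (Fin n))}
    (hC : 0 ≤ C)
    (hupper : ∀ x ∈ spt μ, ∀ r : ℝ, 0 < r → r < rbar → μ (ball x r) ≤ ENNReal.ofReal (C * r ^ q))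
    (hG : ↑G ⊆ spt μ) (hr0 : 0 < r) (hr1 : r ≤ 1) (hrbar : r < rbar) (ht : 1 ≤ t) (hR : 0 ≤ R)
    (hcard : (G.card : ℝ) * r ^ n ≤ (2 * R + r) ^ n) :
    μ (⋃ g ∈ G, ball g (r ^ t)) ≤ ENNReal.ofReal (C * (2 * R + 1) ^ n * r ^ (t * q - n)) := by
  have hρ : 0 < r ^ t := Real.rpow_pos_of_pos hr0 t
  have hρr : r ^ t ≤ r := Real.rpow_le_self_of_le_one hr0.le hr1 ht
  have hsplit : (r ^ t) ^ q = r ^ n * r ^ (t * q - n) := by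
    rw [← Real.rpow_mul hr0.le, ← Real.rpow_natCast, ← Real.rpow_add hr0]; ring_nf
  calc μ (⋃ g ∈ G, ball g (r ^ t))
      ≤ ∑ g ∈ G, μ (ball g (r ^ t)) := measure_biUnion_finset_le _ _
    _ ≤ ∑ _g ∈ G, ENNReal.ofReal (C * (r ^ t) ^ q) :=
        Finset.sum_le_sum fun g hg => hupper g (hG hg) _ hρ (hρr.trans_lt hrbar)
    _ = ENNReal.ofReal (C * (G.card * r ^ n) * r ^ (t * q - n)) := by
        rw [Finset.sum_const, nsmul_eq_mul, ← ENNReal.ofReal_natCast,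
          ← ENNReal.ofReal_mul (by positivity), hsplit]
        ring_nf
    _ ≤ ENNReal.ofReal (C * (2 * R + 1) ^ n * r ^ (t * q - n)) := by
        gcongr
        exact hcard.trans (by gcongr)

lemma inter_spt_subset_baseOp_iUnion {C p q rbar h t : ℝ} {Ω : Set (EuclideanSpace ℝ (Fin n))}
    {G : ℕ → Finset (EuclideanSpace ℝ (Fin n))} {r : ℕ → ℝ} (hC : 0 < C)
    (hbound : ∀ x ∈ spt μ, ∀ r : ℝ, 0 < r → r < rbar →
      ENNReal.ofReal (r ^ p / C) ≤ μ (Metric.ball x r) ∧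
        μ (Metric.ball x r) ≤ ENNReal.ofReal (C * r ^ q))
    (hΩ : IsOpen Ω) (ht : 1 ≤ t) (htp : t * p ≤ q + h) (hr0 : ∀ k, 0 < r k)
    (hr1 : ∀ k, r k ≤ 1) (hrbar : ∀ k, 2 * r k < rbar) (hr : Tendsto r atTop (𝓝 0))
    (hG : ∀ k, ↑(G k) ⊆ spt μ)
    (hcov : ∀ k, ∀ y ∈ spt μ, ball y (r k) ⊆ Ω → ∃ g ∈ G k, dist y g ≤ r k) :
    Ω ∩ spt μ ⊆ baseOp μ h (⋃ k, ⋃ g ∈ G k, ball g (r k ^ t)) := by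
  rintro x ⟨hxΩ, hx⟩
  obtain ⟨δ, hδ, hδΩ⟩ := Metric.isOpen_iff.1 hΩ x hxΩ
  refine mem_baseOp_of_tendsto (c := ENNReal.ofReal (C ^ 2 * 2 ^ (q + h))⁻¹) hx
    (fun k => mul_pos two_pos (hr0 k))
    (by simpa using hr.const_mul 2) (ENNReal.ofReal_pos.2 (by positivity)) ?_
  filter_upwards [hr.eventually (eventually_lt_nhds hδ)] with k hk
  obtain ⟨g, hg, hgx⟩ := hcov k x hx ((ball_subset_ball hk.le).trans hδΩ)
  have hρ : 0 < r k ^ t := Real.rpow_pos_of_pos (hr0 k) t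
  have hρr : r k ^ t ≤ r k := Real.rpow_le_self_of_le_one (hr0 k).le (hr1 k) ht
  have hpow : r k ^ (q + h) ≤ (r k ^ t) ^ p := by
    rw [← Real.rpow_mul (hr0 k).le]
    exact Real.rpow_le_rpow_of_exponent_ge (hr0 k) (hr1 k) htp
  have hA : ball g (r k ^ t) ⊆ ⋃ k, ⋃ g ∈ G k, ball g (r k ^ t) :=
    fun z hz => mem_iUnion.2 ⟨k, mem_iUnion₂.2 ⟨g, hg, hz⟩⟩
  exact ofReal_le_densityRatio hC hρ hρr (by rwa [dist_comm]) hpow hA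
    (hbound g (hG k hg) _ hρ (by linarith [hr0 k, hrbar k])).1
    (hbound x hx _ (mul_pos two_pos (hr0 k)) (hrbar k)).2

end DensityRatio

theorem stmt_12_general {n : ℕ} (μ : Measure (EuclideanSpace ℝ (Fin n)))
    (C p q rbar : ℝ) (hC : 0 < C) (hp : 0 < p) (hq : 0 < q) (hrbar : 0 < rbar)
    (hqmin : q ≤ min (n : ℝ) p)
    (hbound : ∀ x ∈ spt μ, ∀ r : ℝ, 0 < r → r < rbar →
      ENNReal.ofReal (r ^ p / C) ≤ μ (Metric.ball x r) ∧
        μ (Metric.ball x r) ≤ ENNReal.ofReal (C * r ^ q)) :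
    ∀ ε : ℝ, 0 < ε → ∀ h : ℝ, (n : ℝ) * p / q - q < h →
      ∀ Ω : Set (EuclideanSpace ℝ (Fin n)), IsOpen Ω → Ω.Nonempty → Bornology.IsBounded Ω →
        ∃ A : Set (EuclideanSpace ℝ (Fin n)), IsOpen A ∧ A ⊆ Ω ∧
          μ A < ENNReal.ofReal ε ∧
          Ω ∩ spt μ ⊆ baseOp μ h A ∧ baseOp μ h A ⊆ closure Ω ∩ spt μ := by
  intro ε hε h hh Ω hΩ _ hΩb
  obtain ⟨t, hnt, htp⟩ : ∃ t, (n : ℝ) / q < t ∧ t < (q + h) / p := exists_between <| by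
    rw [div_lt_div_iff₀ hq hp]; rw [sub_lt_iff_lt_add, div_lt_iff₀ hq] at hh; linarith
  have ht : 1 ≤ t := ((one_le_div hq).2 (hqmin.trans (min_le_left _ _))).trans hnt.le
  rw [div_lt_iff₀ hq] at hnt
  rw [lt_div_iff₀ hp] at htp
  obtain ⟨R, hR, hΩR⟩ := hΩb.subset_ball_lt 0 0
  have hsmall : Tendsto (fun r : ℝ => ENNReal.ofReal (C * (2 * R + 1) ^ n * r ^ (t * q - n)))
      (𝓝[>] 0) (𝓝 0) := by
    have := ((Real.continuous_rpow_const (sub_pos.2 hnt).le).tendsto 0).const_mul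
      (C * (2 * R + 1) ^ n)
    rw [Real.zero_rpow (sub_pos.2 hnt).ne', mul_zero] at this
    simpa using (ENNReal.tendsto_ofReal this).mono_left nhdsWithin_le_nhds
  obtain ⟨r, hr, hr0, hsum⟩ := exists_seq_tendsto_zero_tsum_lt
    (eventually_nhdsWithin_of_eventually_nhds
      ((eventually_le_nhds one_pos).and (eventually_lt_nhds (half_pos hrbar))))
    hsmall (ENNReal.ofReal_pos.2 hε).ne'
  choose G hGS hGcov hGcard using fun k => exists_finset_cover_card_mul_pow_finrank_le
    (S := {y | y ∈ spt μ ∧ ball y (r k) ⊆ Ω}) hR.le (hr k).1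
    fun y hy => hΩR (hy.2 (mem_ball_self (hr k).1))
  simp only [finrank_euclideanSpace_fin] at hGcard
  have hAΩ : ⋃ k, ⋃ g ∈ G k, ball g (r k ^ t) ⊆ Ω := iUnion_subset fun k => iUnion₂_subset
    fun g hg => (ball_subset_ball (Real.rpow_le_self_of_le_one (hr k).1.le (hr k).2.1 ht)).trans
      (hGS k hg).2
  refine ⟨_, isOpen_iUnion fun k => isOpen_biUnion fun g _ => isOpen_ball, hAΩ, ?_,
    inter_spt_subset_baseOp_iUnion hC hbound hΩ ht htp.le (fun k => (hr k).1)
      (fun k => (hr k).2.1) (fun k => by linarith [(hr k).2.2]) hr0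
      (fun k g hg => (hGS k hg).1) fun k y hy hyΩ => hGcov k y ⟨hy, hyΩ⟩,
    (baseOp_subset_closure_inter_spt h _).trans (inter_subset_inter_left _ (closure_mono hAΩ))⟩
  calc μ (⋃ k, ⋃ g ∈ G k, ball g (r k ^ t))
      ≤ ∑' k, μ (⋃ g ∈ G k, ball g (r k ^ t)) := measure_iUnion_le _
    _ ≤ ∑' k, ENNReal.ofReal (C * (2 * R + 1) ^ n * r k ^ (t * q - n)) :=
        ENNReal.tsum_le_tsum fun k => measure_biUnion_ball_rpow_le hC.le
          (fun x hx r h0 h1 => (hbound x hx r h0 h1).2) (fun g hg => (hGS k hg).1) (hr k).1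
          (hr k).2.1 (by linarith [(hr k).1, (hr k).2.2]) ht hR.le (hGcard k)
    _ < ENNReal.ofReal ε := hsum

theorem stmt_12 {n : ℕ} (μ : Measure (EuclideanSpace ℝ (Fin n)))
    [IsLocallyFiniteMeasure μ] [μ.Regular] (hspt : (spt μ).Nonempty)
    (C p q rbar : ℝ) (hC : 0 < C) (hp : 0 < p) (hq : 0 < q) (hrbar : 0 < rbar)
    (hqmin : q ≤ min (n : ℝ) p)
    (hbound : ∀ x ∈ spt μ, ∀ r : ℝ, 0 < r → r < rbar →
      ENNReal.ofReal (r ^ p / C) ≤ μ (Metric.ball x r) ∧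
        μ (Metric.ball x r) ≤ ENNReal.ofReal (C * r ^ q)) :
    ∀ ε : ℝ, 0 < ε → ∀ h : ℝ, (n : ℝ) * p / q - q < h →
      ∀ Ω : Set (EuclideanSpace ℝ (Fin n)), IsOpen Ω → Ω.Nonempty → Bornology.IsBounded Ω →
        ∃ A : Set (EuclideanSpace ℝ (Fin n)), IsOpen A ∧ A ⊆ Ω ∧
          μ A < ENNReal.ofReal ε ∧
          Ω ∩ spt μ ⊆ baseOp μ h A ∧ baseOp μ h A ⊆ closure Ω ∩ spt μ :=
  stmt_12_general μ C p q rbar hC hp hq hrbar hqmin hbound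
end
end

section
/- Let μ be a nontrivial Radon outer measure on ℝ^n satisfying r^p/C ≤ μ(B_r(x)) ≤ C r^q for all x ∈ spt μ, r ∈ (0, r̄), with q ≤ min{n, p}. Then for every ε > 0 and every h > np/q − q there exists an open set U ⊂ ℝ^n with μ(U) < ε and b^{μ,h}(U) = spt μ. -/
open MeasureTheory Metric Filter Set Topology

noncomputable section

/-!
Fix `α = (q + h) / p`. At scale `k` take a maximal `δ`-separated net `T` of
`spt μ ∩ closedBall 0 k` and the balls `B(y, δ^α)`, `y ∈ T`. A volume packing argument gives
`#T ≲ (k + 1)^n δ^(-n)`, so the upper bound `μ(B(y, ρ)) ≤ C ρ^q` makes the total measure of these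
balls `≲ δ^(α q - n)`; since `h > n p / q - q` means `α q > n`, a small `δ` makes it as small as
we like, and `U` is the union over all scales. Every `x ∈ spt μ` lies within `δ` of some `y ∈ T`,
so `B(x, 2δ) ∩ U ⊇ B(y, δ^α)` has measure at least `δ^(α p) / C = δ^(q + h) / C`, while
`μ(B(x, 2δ)) (2δ)^h ≤ C (2δ)^(q + h)`: the density ratio at radius `2δ` stays above
`1 / (C² 2^(q + h))` along the scales.
-/

open scoped NNReal ENNReal
open Module

lemma Finset.card_mul_pow_le_of_pairwise_lt_dist {E : Type*} [NormedAddCommGroup E]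
    [NormedSpace ℝ E] [FiniteDimensional ℝ E] {t : Finset E} {r R : ℝ} (hr : 0 < r)
    (hR : 0 ≤ R) (hsep : (t : Set E).Pairwise fun y z => 2 * r < dist y z)
    (ht : (t : Set E) ⊆ closedBall 0 R) :
    (t.card : ℝ) * r ^ finrank ℝ E ≤ (R + r) ^ finrank ℝ E := by
  -- any measurable structure will do to count with a Haar measure
  let _ : MeasurableSpace E := borel E
  have : BorelSpace E := ⟨rfl⟩
  set μ : Measure E := Measure.addHaar
  have hdisj : (t : Set E).PairwiseDisjoint fun y => ball y r := fun y hy z hz hyz =>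
    ball_disjoint_ball (by linarith [hsep hy hz hyz])
  have hsub : (⋃ y ∈ t, ball y r) ⊆ closedBall 0 (R + r) := by
    simp only [iUnion_subset_iff]
    exact fun y hy => (ball_subset_closedBall).trans
      (closedBall_subset_closedBall' (by linarith [mem_closedBall.mp (ht hy)]))
  have key : ∑ y ∈ t, μ (ball y r) ≤ μ (closedBall 0 (R + r)) :=
    (measure_biUnion_finset hdisj fun _ _ => measurableSet_ball).symm.le.trans (measure_mono hsub)
  simp only [Measure.addHaar_ball_of_pos μ _ hr, Finset.sum_const, nsmul_eq_mul,
    Measure.addHaar_closedBall μ _ (by positivity : 0 ≤ R + r), ← mul_assoc] at key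
  rw [ENNReal.mul_le_mul_iff_left (measure_ball_pos μ 0 one_pos).ne' measure_ball_lt_top.ne,
    ← ENNReal.ofReal_natCast, ← ENNReal.ofReal_mul (by positivity),
    ENNReal.ofReal_le_ofReal_iff (by positivity)] at key
  exact key

lemma TotallyBounded.exists_finset_separated_net {X : Type*} [MetricSpace X] {s : Set X}
    (hs : TotallyBounded s) {δ : ℝ} (hδ : 0 < δ) :
    ∃ t : Finset X, (t : Set X) ⊆ s ∧ (t : Set X).Pairwise (fun y z => δ < dist y z) ∧
      ∀ x ∈ s, ∃ y ∈ t, dist x y ≤ δ := by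
  lift δ to ℝ≥0 using hδ.le
  obtain ⟨N, -, hNfin, hN⟩ := exists_finite_isCover_of_totallyBounded
    (ε := δ / 2) (div_pos (mod_cast hδ) two_pos).ne' hs
  have hpack : packingNumber δ s ≠ ⊤ := by
    refine ne_top_of_le_ne_top (Set.encard_ne_top_iff.mpr hNfin) ?_
    simpa [mul_div_cancel₀] using
      (packingNumber_two_mul_le_externalCoveringNumber (δ / 2) s).trans
        hN.externalCoveringNumber_le_encard
  have hfin : (maximalSeparatedSet δ s).Finite := by
    rw [← Set.encard_ne_top_iff, encard_maximalSeparatedSet hpack]; exact hpack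
  refine ⟨hfin.toFinset, by simpa using maximalSeparatedSet_subset, ?_, ?_⟩
  · intro y hy z hz hyz
    simpa [edist_dist] using
      isSeparated_maximalSeparatedSet (by simpa using hy) (by simpa using hz) hyz
  · intro x hx
    obtain ⟨y, hy, hxy⟩ := isCover_maximalSeparatedSet hpack hx
    exact ⟨y, by simpa using hy, by simpa [edist_dist] using hxy⟩

lemma tendsto_const_mul_rpow_nhdsGT_zero {σ : ℝ} (hσ : 0 < σ) (K : ℝ) :
    Tendsto (fun δ : ℝ => K * δ ^ σ) (𝓝[>] 0) (𝓝 0) := by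
  simpa [Real.zero_rpow hσ.ne'] using
    ((Real.continuousAt_rpow_const 0 σ (Or.inr hσ.le)).tendsto.mono_left
      nhdsWithin_le_nhds).const_mul K

lemma exists_finset_net_sum_measure_ball_rpow_le {E : Type*} [NormedAddCommGroup E]
    [NormedSpace ℝ E] [FiniteDimensional ℝ E] [MeasurableSpace E] (μ : Measure E)
    {S : Set E} {C q α rbar R η δ₀ : ℝ} (hC : 0 ≤ C) (hR : 0 ≤ R) (hη : 0 < η)
    (hδ₀ : 0 < δ₀) (hδ₀1 : δ₀ ≤ 1) (hδ₀rbar : δ₀ < rbar) (hα : 1 ≤ α)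
    (hαq : (finrank ℝ E : ℝ) < α * q)
    (hup : ∀ y ∈ S, ∀ r : ℝ, 0 < r → r < rbar → μ (ball y r) ≤ ENNReal.ofReal (C * r ^ q)) :
    ∃ δ ∈ Ioc 0 δ₀, ∃ t : Finset E, (t : Set E) ⊆ S ∧
      (∀ x ∈ S ∩ closedBall 0 R, ∃ y ∈ t, dist x y ≤ δ) ∧
      ∑ y ∈ t, μ (ball y (δ ^ α)) ≤ ENNReal.ofReal η := by
  set d := finrank ℝ E
  obtain ⟨δ, hδη, hδ, hδδ₀⟩ :=
    (((tendsto_const_mul_rpow_nhdsGT_zero (sub_pos.mpr hαq) (C * (2 * (R + 1)) ^ d)).eventually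
      (ge_mem_nhds hη)).and (Ioc_mem_nhdsGT hδ₀)).exists
  obtain ⟨t, htS, hsep, hnet⟩ := ((isCompact_closedBall (0 : E) R).totallyBounded.subset
    inter_subset_right).exists_finset_separated_net hδ
  refine ⟨δ, ⟨hδ, hδδ₀⟩, t, htS.trans inter_subset_left, hnet, ?_⟩
  have hρδ : δ ^ α ≤ δ := Real.rpow_le_self_of_le_one hδ.le (hδδ₀.trans hδ₀1) hα
  have hball : ∀ y ∈ t, μ (ball y (δ ^ α)) ≤ ENNReal.ofReal (C * (δ ^ α) ^ q) := fun y hy =>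
    hup y (htS hy).1 _ (Real.rpow_pos_of_pos hδ α) (by linarith)
  have hcard : (t.card : ℝ) * (δ / 2) ^ d ≤ (R + 1) ^ d :=
    (Finset.card_mul_pow_le_of_pairwise_lt_dist (half_pos hδ) hR
      (fun y hy z hz hyz => by linarith [hsep hy hz hyz]) (htS.trans inter_subset_right)).trans
      (by gcongr; linarith [hδδ₀.trans hδ₀1])
  have hsplit : (δ ^ α) ^ q = 2 ^ d * (δ / 2) ^ d * δ ^ (α * q - d) := by
    rw [← Real.rpow_mul hδ.le, ← mul_pow, mul_div_cancel₀ _ two_ne_zero, ← Real.rpow_natCast,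
      ← Real.rpow_add hδ]
    ring_nf
  calc ∑ y ∈ t, μ (ball y (δ ^ α)) ≤ t.card • ENNReal.ofReal (C * (δ ^ α) ^ q) :=
        Finset.sum_le_card_nsmul _ _ _ hball
    _ = ENNReal.ofReal (t.card * (C * (δ ^ α) ^ q)) := by
        rw [nsmul_eq_mul, ENNReal.ofReal_mul (Nat.cast_nonneg _), ENNReal.ofReal_natCast]
    _ ≤ ENNReal.ofReal η := by
        refine ENNReal.ofReal_le_ofReal (le_trans ?_ hδη)
        rw [hsplit, mul_pow]
        have : 0 ≤ C * 2 ^ d * δ ^ (α * q - d) := by positivity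
        nlinarith

lemma ofReal_le_measure_ball_inter_div {X : Type*} [PseudoMetricSpace X] [MeasurableSpace X]
    (μ : Measure X) {U : Set X} {x y : X} {C p q h δ ρ : ℝ} (hC : 0 < C) (hδ : 0 < δ)
    (hxy : dist x y ≤ δ) (hρδ : ρ ≤ δ) (hρ : ρ ^ p = δ ^ (q + h)) (hyU : ball y ρ ⊆ U)
    (hy : ENNReal.ofReal (ρ ^ p / C) ≤ μ (ball y ρ))
    (hx : μ (ball x (2 * δ)) ≤ ENNReal.ofReal (C * (2 * δ) ^ q)) :
    ENNReal.ofReal (1 / (C ^ 2 * 2 ^ (q + h))) ≤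
      μ (ball x (2 * δ) ∩ U) / (μ (ball x (2 * δ)) * ENNReal.ofReal ((2 * δ) ^ h)) := by
  have hsub : ball y ρ ⊆ ball x (2 * δ) ∩ U := by
    refine subset_inter (fun z hz => ?_) hyU
    rw [mem_ball] at hz ⊢
    linarith [dist_triangle z y x, dist_comm x y]
  have hden : μ (ball x (2 * δ)) * ENNReal.ofReal ((2 * δ) ^ h) ≤
      ENNReal.ofReal (C * 2 ^ (q + h) * δ ^ (q + h)) := by
    calc μ (ball x (2 * δ)) * ENNReal.ofReal ((2 * δ) ^ h)
        ≤ ENNReal.ofReal (C * (2 * δ) ^ q) * ENNReal.ofReal ((2 * δ) ^ h) := by gcongr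
      _ = ENNReal.ofReal (C * 2 ^ (q + h) * δ ^ (q + h)) := by
        rw [← ENNReal.ofReal_mul (by positivity), mul_assoc, ← Real.rpow_add (by positivity),
          Real.mul_rpow zero_le_two hδ.le, mul_assoc]
  calc ENNReal.ofReal (1 / (C ^ 2 * 2 ^ (q + h)))
      = ENNReal.ofReal (δ ^ (q + h) / C) / ENNReal.ofReal (C * 2 ^ (q + h) * δ ^ (q + h)) := by
        rw [← ENNReal.ofReal_div_of_pos (by positivity)]
        congr 1
        field_simp
    _ ≤ _ := ENNReal.div_le_div (hρ ▸ hy.trans (measure_mono hsub)) hden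

lemma baseOp_iUnion_ball_eq_spt {n : ℕ} (μ : Measure (EuclideanSpace ℝ (Fin n)))
    {C p q h rbar α : ℝ} (hC : 0 < C) (hα : 1 ≤ α) (hαp : α * p = q + h)
    (hbound : ∀ x ∈ spt μ, ∀ r : ℝ, 0 < r → r < rbar →
      ENNReal.ofReal (r ^ p / C) ≤ μ (ball x r) ∧ μ (ball x r) ≤ ENNReal.ofReal (C * r ^ q))
    {δ : ℕ → ℝ} {t : ℕ → Finset (EuclideanSpace ℝ (Fin n))} (hδ : ∀ k, 0 < δ k)
    (hδ1 : ∀ k, δ k ≤ 1) (hδr : ∀ k, 2 * δ k < rbar) (hδ0 : Tendsto δ atTop (𝓝 0))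
    (ht : ∀ k, (t k : Set _) ⊆ spt μ)
    (hnet : ∀ k : ℕ, ∀ x ∈ spt μ ∩ closedBall 0 k, ∃ y ∈ t k, dist x y ≤ δ k) :
    baseOp μ h (⋃ k, ⋃ y ∈ t k, ball y (δ k ^ α)) = spt μ := by
  refine Subset.antisymm (fun x hx => hx.1) fun x hx => ⟨hx, ?_⟩
  have htend : Tendsto (fun k => 2 * δ k) atTop (𝓝[>] 0) :=
    tendsto_nhdsWithin_iff.mpr ⟨by simpa using hδ0.const_mul 2,
      Eventually.of_forall fun k => by simpa using hδ k⟩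
  have hev : ∀ᶠ k in atTop, ENNReal.ofReal (1 / (C ^ 2 * 2 ^ (q + h))) ≤
      μ (ball x (2 * δ k) ∩ ⋃ k, ⋃ y ∈ t k, ball y (δ k ^ α)) /
        (μ (ball x (2 * δ k)) * ENNReal.ofReal ((2 * δ k) ^ h)) := by
    filter_upwards [eventually_ge_atTop ⌈‖x‖⌉₊] with k hk
    obtain ⟨y, hyt, hxy⟩ := hnet k x ⟨hx, by
      simpa using (Nat.le_ceil _).trans (Nat.cast_le.mpr hk)⟩
    have hρδ : δ k ^ α ≤ δ k := Real.rpow_le_self_of_le_one (hδ k).le (hδ1 k) hα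
    exact ofReal_le_measure_ball_inter_div μ hC (hδ k) hxy hρδ
      (by rw [← Real.rpow_mul (hδ k).le, hαp])
      (subset_iUnion_of_subset k (subset_iUnion₂_of_subset y hyt subset_rfl))
      (hbound y (ht k hyt) _ (Real.rpow_pos_of_pos (hδ k) α) (by linarith [hδr k, hδ k])).1
      (hbound x hx _ (by linarith [hδ k]) (hδr k)).2
  exact (ENNReal.ofReal_pos.mpr (by positivity)).trans_le
    (le_limsup_of_frequently_le' (htend.frequently hev.frequently))

theorem stmt_13_general {n : ℕ} (μ : Measure (EuclideanSpace ℝ (Fin n)))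
    (C p q rbar : ℝ) (hC : 0 < C) (hp : 0 < p) (hq : 0 < q) (hrbar : 0 < rbar)
    (hqmin : q ≤ min (n : ℝ) p)
    (hbound : ∀ x ∈ spt μ, ∀ r : ℝ, 0 < r → r < rbar →
      ENNReal.ofReal (r ^ p / C) ≤ μ (Metric.ball x r) ∧
        μ (Metric.ball x r) ≤ ENNReal.ofReal (C * r ^ q)) :
    ∀ ε : ℝ, 0 < ε → ∀ h : ℝ, (n : ℝ) * p / q - q < h →
      ∃ U : Set (EuclideanSpace ℝ (Fin n)), IsOpen U ∧
        μ U < ENNReal.ofReal ε ∧ baseOp μ h U = spt μ := by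
  intro ε hε h hh
  set α := (q + h) / p with hα_def
  have hnpq : (n : ℝ) * p < (q + h) * q := by
    have := (div_lt_iff₀ hq).mp (by linarith : (n : ℝ) * p / q < q + h)
    linarith
  have hαq : (n : ℝ) < α * q := by
    rw [hα_def, div_mul_eq_mul_div, lt_div_iff₀ hp]; linarith
  have hα : 1 ≤ α := by
    rw [hα_def, le_div_iff₀ hp]; nlinarith [hqmin.trans (min_le_left _ _)]
  obtain ⟨η, hη, hηε⟩ := ENNReal.exists_pos_sum_of_countable (ENNReal.ofReal_pos.mpr hε).ne' ℕ
  have hhalf_le_one (k : ℕ) : (1 / 2 : ℝ) ^ k ≤ 1 := pow_le_one₀ (by norm_num) (by norm_num)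
  choose δ hδ t ht hnet hsum using fun k : ℕ =>
    exists_finset_net_sum_measure_ball_rpow_le μ (R := k) (δ₀ := min ((1 / 2) ^ k) (rbar / 3))
      hC.le k.cast_nonneg (hη k) (by positivity) ((min_le_left _ _).trans (hhalf_le_one k))
      ((min_le_right _ _).trans_lt (by linarith)) hα (by simpa using hαq)
      fun y hy r hr hrb => (hbound y hy r hr hrb).2
  have hδ_le (k : ℕ) : δ k ≤ (1 / 2) ^ k := (hδ k).2.trans (min_le_left _ _)
  refine ⟨⋃ k, ⋃ y ∈ t k, ball y (δ k ^ α),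
    isOpen_iUnion fun k => isOpen_biUnion fun y _ => isOpen_ball, ?_,
    baseOp_iUnion_ball_eq_spt μ hC hα (div_mul_cancel₀ _ hp.ne') hbound (fun k => (hδ k).1)
      (fun k => (hδ_le k).trans (hhalf_le_one k))
      (fun k => by linarith [(hδ k).2.trans (min_le_right _ _)])
      (squeeze_zero (fun k => (hδ k).1.le) hδ_le
        (tendsto_pow_atTop_nhds_zero_of_lt_one (by norm_num) (by norm_num))) ht hnet⟩
  calc μ (⋃ k, ⋃ y ∈ t k, ball y (δ k ^ α))
      ≤ ∑' k, μ (⋃ y ∈ t k, ball y (δ k ^ α)) := measure_iUnion_le _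
    _ ≤ ∑' k, (η k : ℝ≥0∞) := ENNReal.tsum_le_tsum fun k =>
        (measure_biUnion_finset_le _ _).trans ((hsum k).trans_eq ENNReal.ofReal_coe_nnreal)
    _ < ENNReal.ofReal ε := hηε

theorem stmt_13 {n : ℕ} (μ : Measure (EuclideanSpace ℝ (Fin n)))
    [IsLocallyFiniteMeasure μ] [μ.Regular] (hspt : (spt μ).Nonempty)
    (C p q rbar : ℝ) (hC : 0 < C) (hp : 0 < p) (hq : 0 < q) (hrbar : 0 < rbar)
    (hqmin : q ≤ min (n : ℝ) p)
    (hbound : ∀ x ∈ spt μ, ∀ r : ℝ, 0 < r → r < rbar →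
      ENNReal.ofReal (r ^ p / C) ≤ μ (Metric.ball x r) ∧
        μ (Metric.ball x r) ≤ ENNReal.ofReal (C * r ^ q)) :
    ∀ ε : ℝ, 0 < ε → ∀ h : ℝ, (n : ℝ) * p / q - q < h →
      ∃ U : Set (EuclideanSpace ℝ (Fin n)), IsOpen U ∧
        μ U < ENNReal.ofReal ε ∧ baseOp μ h U = spt μ :=
  stmt_13_general μ C p q rbar hC hp hq hrbar hqmin hbound
end
end

section
/- Let G ⊂ ℝ^k be bounded open with C¹ boundary, k ≤ n, and φ ∈ C¹(ℝ^k, ℝ^n) such that φ restricted to the closure of G is injective with Jacobian Jφ(y) := [det((Dφ)ᵗ Dφ)(y)]^{1/2} > 0 for all y in the closure of G. Set μ := H^k ⌞ φ(G). Then there exist C, r̄ ∈ (0,∞) such that r^k/C ≤ μ(B_r(x)) ≤ C r^k for all x ∈ spt μ and r ∈ (0, r̄]. -/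
open MeasureTheory Metric Filter Set Topology

noncomputable section

/-- The matrix of the differential of `φ` at `y`, with columns `Dφ(y)·e_j`. -/
def Dmat {k n : ℕ} (φ : EuclideanSpace ℝ (Fin k) → EuclideanSpace ℝ (Fin n))
    (y : EuclideanSpace ℝ (Fin k)) : Matrix (Fin n) (Fin k) ℝ :=
  Matrix.of fun i j => fderiv ℝ φ y (EuclideanSpace.single j 1) i

/-
On the compact set `closure G` the map `φ` is bi-Lipschitz: it is Lipschitz because it is `C¹`,
and a compactness argument over `closure G ×ˢ closure G` upgrades the local lower bound
`c ‖x - y‖ ≤ ‖φ x - φ y‖` near the diagonal (strict differentiability with injective `Dφ`)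
and injectivity away from it to a global one. A `C¹` boundary gives the interior ball
(corkscrew) condition: every ball of radius `ρ ≤ t` centred in `closure G` contains a ball of
radius `t ρ` inside `G`, obtained near the boundary by stepping from the centre in a direction where
the defining function decreases. Hence `μ (B_r(φ y)) = H^k(B_r(φ y) ∩ φ(G))` is squeezed between
`H^k`-measures of Euclidean balls of radii comparable to `r`, which scale like `r ^ k`.
-/

open scoped NNReal ENNReal Matrix

theorem IsCompact.exists_pos_forall_of_antitone {X : Type*} [TopologicalSpace X] {K : Set X}
    (hK : IsCompact K) {P : ℝ → X → Prop} (hP : ∀ z s t, 0 < s → s ≤ t → P t z → P s z)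
    (hloc : ∀ a ∈ K, ∃ t > 0, ∀ᶠ z in 𝓝 a, P t z) : ∃ t > 0, ∀ z ∈ K, P t z := by
  have hev : ∀ᶠ s in 𝓝 (0 : ℝ), ∀ z ∈ K, 0 < s → P s z := by
    refine hK.eventually_forall_of_forall_eventually fun a ha => ?_
    obtain ⟨t, ht, hPt⟩ := hloc a ha
    filter_upwards [(eventually_lt_nhds ht).prod_nhds hPt] with q ⟨hqt, hq⟩ hq0
    exact hP q.2 q.1 t hq0 hqt.le hq
  obtain ⟨s, hs, hs0⟩ := ((hev.filter_mono nhdsWithin_le_nhds).and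
    (self_mem_nhdsWithin : Ioi (0 : ℝ) ∈ 𝓝[>] 0)).exists
  exact ⟨s, hs0, fun z hz => hs z hz hs0⟩

theorem HasStrictFDerivAt.exists_pos_eventually_mul_norm_sub_le {𝕜 E F : Type*}
    [NontriviallyNormedField 𝕜] [NormedAddCommGroup E] [NormedSpace 𝕜 E]
    [NormedAddCommGroup F] [NormedSpace 𝕜 F] {φ : E → F} {φ' : E →L[𝕜] F} {a : E} {K : ℝ≥0}
    (hφ : HasStrictFDerivAt φ φ' a) (hK : AntilipschitzWith K φ') :
    ∃ c > 0, ∀ᶠ p in 𝓝 (a, a), c * ‖p.1 - p.2‖ ≤ ‖φ p.1 - φ p.2‖ := by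
  set c : ℝ := (2 * (K + 1))⁻¹
  refine ⟨c, by positivity, ?_⟩
  filter_upwards [hφ.isLittleO.bound (by positivity : 0 < c)] with p hp
  have hlin : ‖p.1 - p.2‖ ≤ (K + 1) * ‖φ' (p.1 - p.2)‖ := by
    have := hK.le_mul_dist (p.1 - p.2) 0
    rw [dist_zero_right, map_zero, dist_zero_right] at this
    nlinarith [norm_nonneg (φ' (p.1 - p.2))]
  have htri := norm_sub_norm_le (φ' (p.1 - p.2)) (φ p.1 - φ p.2)
  rw [norm_sub_rev (φ' _)] at htri
  have hc : c * (K + 1) = 1 / 2 := by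
    simp only [c]
    field_simp
  have : c * ‖p.1 - p.2‖ ≤ ‖φ' (p.1 - p.2)‖ / 2 := by
    calc c * ‖p.1 - p.2‖ ≤ c * ((K + 1) * ‖φ' (p.1 - p.2)‖) := by gcongr
      _ = ‖φ' (p.1 - p.2)‖ / 2 := by rw [← mul_assoc, hc]; ring
  linarith

theorem IsCompact.exists_antilipschitzWith_domRestrict {X Y : Type*} [MetricSpace X]
    [MetricSpace Y] {φ : X → Y} {s : Set X} (hs : IsCompact s) (hφ : Continuous φ)
    (hinj : InjOn φ s)
    (hloc : ∀ a ∈ s, ∃ c > 0, ∀ᶠ p in 𝓝 (a, a), c * dist p.1 p.2 ≤ dist (φ p.1) (φ p.2)) :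
    ∃ K > 0, AntilipschitzWith K (s.domRestrict φ) := by
  obtain ⟨c, hc, hcs⟩ := (hs.prod hs).exists_pos_forall_of_antitone
    (P := fun c p => c * dist p.1 p.2 ≤ dist (φ p.1) (φ p.2))
    (fun p s t _ hst h => le_trans (by gcongr) h) fun ⟨a, b⟩ ⟨ha, hb⟩ => by
      obtain rfl | hab := eq_or_ne a b
      · exact hloc a ha
      have hm : 0 < dist (φ a) (φ b) := dist_pos.2 fun h => hab (hinj ha hb h)
      have hd : 0 < dist a b := dist_pos.2 hab
      set t := dist (φ a) (φ b) / (2 * dist a b)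
      have hlt : ∀ᶠ q in 𝓝 (a, b), t * dist q.1 q.2 < dist (φ q.1) (φ q.2) := by
        refine ContinuousAt.eventually_lt (f := fun q : X × X => t * dist q.1 q.2)
          (continuous_const.mul (continuous_fst.dist continuous_snd)).continuousAt
          ((hφ.comp continuous_fst).dist (hφ.comp continuous_snd)).continuousAt ?_
        simp only [t, div_mul_eq_mul_div, mul_div_mul_right _ _ hd.ne']
        linarith
      exact ⟨t, by positivity, hlt.mono fun _ h => h.le⟩
  refine ⟨c⁻¹.toNNReal, Real.toNNReal_pos.2 (inv_pos.2 hc),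
    AntilipschitzWith.of_le_mul_dist fun x y => ?_⟩
  rw [Real.coe_toNNReal _ (by positivity), le_inv_mul_iff₀ hc]
  exact hcs (x, y) ⟨x.2, y.2⟩

theorem ContDiff.exists_antilipschitzWith_domRestrict {E F : Type*} [NormedAddCommGroup E]
    [NormedSpace ℝ E] [FiniteDimensional ℝ E] [NormedAddCommGroup F] [NormedSpace ℝ F]
    {φ : E → F} (hφ : ContDiff ℝ 1 φ) {s : Set E} (hs : IsCompact s) (hinj : InjOn φ s)
    (hD : ∀ y ∈ s, Function.Injective (fderiv ℝ φ y)) :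
    ∃ K > 0, AntilipschitzWith K (s.domRestrict φ) := by
  refine hs.exists_antilipschitzWith_domRestrict hφ.continuous hinj fun a ha => ?_
  obtain ⟨K, -, hK⟩ := LinearMap.exists_antilipschitzWith (fderiv ℝ φ a : E →ₗ[ℝ] F)
    (LinearMap.ker_eq_bot.2 (hD a ha))
  simpa only [dist_eq_norm] using
    (hφ.hasStrictFDerivAt one_ne_zero).exists_pos_eventually_mul_norm_sub_le hK

theorem Dmat_mulVec {k n : ℕ} (φ : EuclideanSpace ℝ (Fin k) → EuclideanSpace ℝ (Fin n))
    (y v : EuclideanSpace ℝ (Fin k)) : Dmat φ y *ᵥ v.ofLp = (fderiv ℝ φ y v).ofLp := by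
  conv_rhs => rw [← (EuclideanSpace.basisFun (Fin k) ℝ).sum_repr v]
  ext i
  simp [Matrix.mulVec, dotProduct, Dmat, mul_comm]

theorem injective_fderiv_of_det_ne_zero {k n : ℕ}
    {φ : EuclideanSpace ℝ (Fin k) → EuclideanSpace ℝ (Fin n)} {y : EuclideanSpace ℝ (Fin k)}
    (h : ((Dmat φ y)ᵀ * Dmat φ y).det ≠ 0) : Function.Injective (fderiv ℝ φ y) := by
  refine (injective_iff_map_eq_zero _).2 fun v hv => ?_
  have : ((Dmat φ y)ᵀ * Dmat φ y) *ᵥ v.ofLp = 0 := by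
    rw [← Matrix.mulVec_mulVec, Dmat_mulVec, hv]
    simp
  simpa using Matrix.eq_zero_of_mulVec_eq_zero h this

def InteriorBallCondition {E : Type*} [PseudoMetricSpace E] (G s : Set E) (c ε : ℝ) : Prop :=
  ∀ z ∈ s, ∀ ρ ∈ Ioc 0 ε, ∃ p, ball p (c * ρ) ⊆ G ∩ ball z ρ

theorem InteriorBallCondition.mono {E : Type*} [PseudoMetricSpace E] {G s s' : Set E}
    {c c' ε ε' : ℝ} (h : InteriorBallCondition G s c ε) (hs : s' ⊆ s) (hc : c' ≤ c)
    (hε : ε' ≤ ε) : InteriorBallCondition G s' c' ε' := fun z hz ρ hρ =>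
  (h z (hs hz) ρ ⟨hρ.1, hρ.2.trans hε⟩).imp fun _ hp =>
    (ball_subset_ball (by gcongr; exact hρ.1.le)).trans hp

theorem HasStrictFDerivAt.exists_interiorBallCondition_neg {E : Type*} [NormedAddCommGroup E]
    [NormedSpace ℝ E] {f : E → ℝ} {f' : E →L[ℝ] ℝ} {x : E} (hf : HasStrictFDerivAt f f' x)
    (hf' : f' ≠ 0) :
    ∃ c > 0, ∃ ε > 0, InteriorBallCondition {w | f w < 0} (ball x ε ∩ {z | f z ≤ 0}) c ε := by
  obtain ⟨u, hu⟩ : ∃ u, f' u = -1 := by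
    obtain ⟨v, hv⟩ := DFunLike.ne_iff.1 hf'
    exact ⟨-(f' v)⁻¹ • v, by simp [inv_mul_cancel₀ hv]⟩
  have hu0 : 0 < ‖u‖ := norm_pos_iff.2 fun h => by simp [h] at hu
  obtain ⟨δ, hδ, hδf⟩ := Metric.eventually_nhds_iff.1
    (hf.isLittleO.bound (by positivity : 0 < (4 * ‖u‖)⁻¹))
  set c := min (1 / 2) (8 * ‖u‖ * (‖f'‖ + 1))⁻¹
  have hc : c ≤ 1 / 2 := min_le_left _ _
  have hc' : c * (‖f'‖ + 1) ≤ (8 * ‖u‖)⁻¹ := by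
    rw [← le_div_iff₀ (by positivity), div_eq_mul_inv, ← mul_inv]
    exact min_le_right _ _
  refine ⟨c, by positivity, δ / 2, by positivity, fun z ⟨hz, (hfz : f z ≤ 0)⟩ ρ ⟨hρ, hρδ⟩ => ?_⟩
  -- step from `z` in the descent direction `u`, by half the radius
  set s := ρ / (2 * ‖u‖)
  refine ⟨z + s • u, fun w hw => ?_⟩
  set p := z + s • u
  rw [mem_ball, dist_eq_norm] at hw hz
  have hpz : ‖p - z‖ = ρ / 2 := by
    simp only [p, s, add_sub_cancel_left, norm_smul, Real.norm_eq_abs,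
      _root_.abs_of_pos (by positivity : 0 < ρ / (2 * ‖u‖))]
    field_simp
  have hwz : ‖w - z‖ < ρ := by
    calc ‖w - z‖ ≤ ‖w - p‖ + ‖p - z‖ := norm_sub_le_norm_sub_add_norm_sub w p z
      _ < c * ρ + ρ / 2 := by rw [hpz]; gcongr
      _ ≤ ρ := by nlinarith
  have hwx : ‖w - x‖ < δ := by
    calc ‖w - x‖ ≤ ‖w - z‖ + ‖z - x‖ := norm_sub_le_norm_sub_add_norm_sub w z x
      _ < δ := by linarith
  have hTaylor : f w - f z - f' (w - z) ≤ s / 2 := by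
    calc f w - f z - f' (w - z) ≤ (4 * ‖u‖)⁻¹ * ‖w - z‖ :=
          (le_abs_self _).trans (hδf (y := (w, z)) (by
            rw [Prod.dist_eq, dist_eq_norm, dist_eq_norm]
            exact max_lt hwx (by linarith)))
      _ ≤ (4 * ‖u‖)⁻¹ * ρ := by gcongr
      _ = s / 2 := by simp only [s]; field_simp; ring
  have hwp : f' (w - p) ≤ s / 4 := by
    calc f' (w - p) ≤ ‖f'‖ * ‖w - p‖ := (le_abs_self _).trans (f'.le_opNorm _)
      _ ≤ (‖f'‖ + 1) * (c * ρ) := by gcongr; linarith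
      _ = (c * (‖f'‖ + 1)) * ρ := by ring
      _ ≤ (8 * ‖u‖)⁻¹ * ρ := by gcongr
      _ = s / 4 := by simp only [s]; field_simp; ring
  have hpz' : f' (p - z) = -s := by simp [p, hu]
  have hsplit : f' (w - z) = f' (w - p) + f' (p - z) := by rw [← map_add, sub_add_sub_cancel]
  have hs : 0 < s := by positivity
  refine ⟨show f w < 0 by linarith, by rwa [mem_ball, dist_eq_norm]⟩

theorem exists_interiorBallCondition_of_contDiffAt {E : Type*} [NormedAddCommGroup E]
    [NormedSpace ℝ E] {G : Set E} {f : E → ℝ} {a : E} (hf : ContDiffAt ℝ 1 f a)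
    (hf' : fderiv ℝ f a ≠ 0) (hG : ∀ᶠ y in 𝓝 a, (y ∈ G ↔ f y < 0)) :
    ∃ c > 0, ∃ ε > 0, InteriorBallCondition G (ball a ε ∩ closure G) c ε := by
  obtain ⟨c, hc, ε₀, hε₀, hball⟩ :=
    (hf.hasStrictFDerivAt one_ne_zero).exists_interiorBallCondition_neg hf'
  obtain ⟨ε₁, hε₁, hε₁G⟩ := Metric.eventually_nhds_iff_ball.1
    (hG.and ((hf.eventually (by simp)).mono fun _ h => h.continuousAt))
  refine ⟨c, hc, min ε₀ (ε₁ / 2), by positivity, fun z ⟨hza, hzG⟩ ρ hρ => ?_⟩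
  have hε : min ε₀ (ε₁ / 2) ≤ ε₀ := min_le_left _ _
  have hzρ : ball z ρ ⊆ ball a ε₁ := ball_subset_ball' (by
    rw [mem_ball] at hza; linarith [hρ.2, min_le_right ε₀ (ε₁ / 2)])
  have hfz : f z ≤ 0 := by
    have hz₁ : z ∈ ball a ε₁ := hzρ (mem_ball_self hρ.1)
    have hzG' : z ∈ closure (ball a ε₁ ∩ G) := isOpen_ball.inter_closure ⟨hz₁, hzG⟩
    have := (hε₁G z hz₁).2.continuousWithinAt.mem_closure hzG' (t := Iic 0)
      fun w hw => ((hε₁G w hw.1).1.1 hw.2).le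
    rwa [isClosed_Iic.closure_eq] at this
  obtain ⟨p, hp⟩ := hball z ⟨ball_subset_ball hε hza, hfz⟩ ρ ⟨hρ.1, hρ.2.trans hε⟩
  exact ⟨p, fun w hw => ⟨((hε₁G w (hzρ (hp hw).2)).1).2 (hp hw).1, (hp hw).2⟩⟩

theorem exists_interiorBallCondition_of_mem_closure {E : Type*} [NormedAddCommGroup E]
    [NormedSpace ℝ E] {G : Set E}
    (hG : ∀ x ∈ frontier G, ∃ f : E → ℝ,
      ContDiffAt ℝ 1 f x ∧ fderiv ℝ f x ≠ 0 ∧ ∀ᶠ y in 𝓝 x, (y ∈ G ↔ f y < 0))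
    {a : E} (ha : a ∈ closure G) :
    ∃ c > 0, ∃ ε > 0, InteriorBallCondition G (ball a ε ∩ closure G) c ε := by
  rw [closure_eq_interior_union_frontier] at ha
  rcases ha with ha | ha
  · obtain ⟨δ, hδ, hδG⟩ := Metric.isOpen_iff.1 isOpen_interior a ha
    refine ⟨1, one_pos, δ / 2, by positivity, fun z ⟨hza, _⟩ ρ hρ => ⟨z, fun w hw => ?_⟩⟩
    rw [one_mul] at hw
    refine ⟨interior_subset (hδG ?_), hw⟩
    rw [mem_ball] at hza hw ⊢
    linarith [dist_triangle w z a, hρ.2]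
  · obtain ⟨f, hf, hf', hfG⟩ := hG a ha
    exact exists_interiorBallCondition_of_contDiffAt hf hf' hfG

theorem IsCompact.exists_interiorBallCondition_closure {E : Type*} [NormedAddCommGroup E]
    [NormedSpace ℝ E] {G : Set E} (hGc : IsCompact (closure G))
    (hG : ∀ x ∈ frontier G, ∃ f : E → ℝ,
      ContDiffAt ℝ 1 f x ∧ fderiv ℝ f x ≠ 0 ∧ ∀ᶠ y in 𝓝 x, (y ∈ G ↔ f y < 0)) :
    ∃ t > 0, InteriorBallCondition G (closure G) t t := by
  obtain ⟨t, ht, hP⟩ := hGc.exists_pos_forall_of_antitone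
    (P := fun t y => InteriorBallCondition G ({y} ∩ closure G) t t)
    (fun _ _ _ _ hst h => h.mono subset_rfl hst hst) fun a ha => by
      obtain ⟨c, hc, ε, hε, h⟩ := exists_interiorBallCondition_of_mem_closure hG ha
      refine ⟨min c ε, by positivity, ?_⟩
      filter_upwards [isOpen_ball.mem_nhds (mem_ball_self hε)] with z hz
      exact h.mono (by rintro _ ⟨rfl, hz'⟩; exact ⟨hz, hz'⟩) (min_le_left _ _) (min_le_right _ _)
  exact ⟨t, ht, fun y hy => hP y hy y ⟨rfl, hy⟩⟩

theorem AntilipschitzWith.le_hausdorffMeasure_image_of_domRestrict {X Y : Type*} [EMetricSpace X]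
    [EMetricSpace Y] [MeasurableSpace X] [BorelSpace X] [MeasurableSpace Y] [BorelSpace Y]
    {f : X → Y} {s A : Set X} {K : ℝ≥0} (hf : AntilipschitzWith K (s.domRestrict f))
    (hA : A ⊆ s) {d : ℝ} (hd : 0 ≤ d) : μH[d] A ≤ (K : ℝ≥0∞) ^ d * μH[d] (f '' A) := by
  have hA' : ((↑) : s → X) '' ((↑) ⁻¹' A) = A := by simpa using hA
  calc μH[d] A = μH[d] ((↑) ⁻¹' A : Set s) := by
        rw [← (isometry_subtype_coe (s := s)).hausdorffMeasure_image (Or.inl hd), hA']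
    _ ≤ (K : ℝ≥0∞) ^ d * μH[d] (s.domRestrict f '' ((↑) ⁻¹' A)) :=
        hf.le_hausdorffMeasure_image hd _
    _ = (K : ℝ≥0∞) ^ d * μH[d] (f '' A) := by
        rw [show s.domRestrict f = f ∘ (↑) from rfl, image_comp, hA']

instance isAddHaarMeasure_hausdorffMeasure_euclideanSpace (k : ℕ) :
    Measure.IsAddHaarMeasure (μH[k] : Measure (EuclideanSpace ℝ (Fin k))) := by
  simpa using isAddHaarMeasure_hausdorffMeasure (E := EuclideanSpace ℝ (Fin k))

theorem exists_hausdorffMeasure_ball_eq (k : ℕ) : ∃ ω > 0, ∀ (x : EuclideanSpace ℝ (Fin k)),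
    ∀ r > 0, μH[k] (ball x r) = ENNReal.ofReal (ω * r ^ k) := by
  set β := μH[k] (ball (0 : EuclideanSpace ℝ (Fin k)) 1)
  refine ⟨β.toReal, ENNReal.toReal_pos (measure_ball_pos _ _ one_pos).ne' measure_ball_lt_top.ne,
    fun x r hr => ?_⟩
  rw [Measure.addHaar_ball_of_pos _ x hr, finrank_euclideanSpace_fin, mul_comm,
    ENNReal.ofReal_mul ENNReal.toReal_nonneg, ENNReal.ofReal_toReal measure_ball_lt_top.ne]

section Density

variable {k : ℕ} {Y : Type*} [MetricSpace Y] [MeasurableSpace Y] [BorelSpace Y]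
  {G : Set (EuclideanSpace ℝ (Fin k))} {φ : EuclideanSpace ℝ (Fin k) → Y} {K L : ℝ≥0}

theorem exists_hausdorffMeasure_ball_inter_image_le (hL : LipschitzOnWith L φ (closure G))
    (hK : AntilipschitzWith K ((closure G).domRestrict φ)) (hK0 : 0 < K) (hL0 : 0 < L) :
    ∃ b > 0, ∀ y ∈ closure G, ∀ r > 0,
      μH[k] (ball (φ y) r ∩ φ '' G) ≤ ENNReal.ofReal (b * r ^ k) := by
  obtain ⟨ω, hω, hball⟩ := exists_hausdorffMeasure_ball_eq k
  refine ⟨ω * (K * L) ^ k, by positivity, fun y hy r hr => ?_⟩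
  have hsub : ball (φ y) r ∩ φ '' G ⊆ φ '' (closure G ∩ ball y (K * r)) := by
    rintro _ ⟨hzr, z, hz, rfl⟩
    refine ⟨z, ⟨subset_closure hz, ?_⟩, rfl⟩
    have := hK.le_mul_dist ⟨z, subset_closure hz⟩ ⟨y, hy⟩
    rw [mem_ball] at hzr ⊢
    calc dist z y ≤ K * dist (φ z) (φ y) := this
      _ < K * r := by gcongr
  calc μH[k] (ball (φ y) r ∩ φ '' G) ≤ μH[k] (φ '' (closure G ∩ ball y (K * r))) :=
        measure_mono hsub
    _ ≤ (L : ℝ≥0∞) ^ (k : ℝ) * μH[k] (closure G ∩ ball y (K * r)) :=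
        (hL.mono inter_subset_left).hausdorffMeasure_image_le (Nat.cast_nonneg k)
    _ ≤ (L : ℝ≥0∞) ^ (k : ℝ) * μH[k] (ball y (K * r)) := by gcongr; exact inter_subset_right
    _ = ENNReal.ofReal (ω * (K * L) ^ k * r ^ k) := by
        rw [hball y _ (by positivity), show (L : ℝ≥0∞) ^ (k : ℝ) = ENNReal.ofReal (L ^ k) by simp,
          ← ENNReal.ofReal_mul (by positivity)]
        congr 1
        ring

theorem exists_le_hausdorffMeasure_ball_inter_image (hL : LipschitzOnWith L φ (closure G))
    (hK : AntilipschitzWith K ((closure G).domRestrict φ)) (hK0 : 0 < K) (hL0 : 0 < L) {t : ℝ}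
    (hG : InteriorBallCondition G (closure G) t t) (ht : 0 < t) :
    ∃ a > 0, ∀ y ∈ closure G, ∀ r > 0, r ≤ L * t →
      ENNReal.ofReal (a * r ^ k) ≤ μH[k] (ball (φ y) r ∩ φ '' G) := by
  obtain ⟨ω, hω, hball⟩ := exists_hausdorffMeasure_ball_eq k
  refine ⟨ω * (t / (K * L)) ^ k, by positivity, fun y hy r hr hrt => ?_⟩
  obtain ⟨p, hp⟩ := hG y hy (r / L) ⟨by positivity, by rwa [div_le_iff₀' (by positivity)]⟩
  have hsub : φ '' (G ∩ ball y (r / L)) ⊆ ball (φ y) r ∩ φ '' G := by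
    rintro _ ⟨z, ⟨hz, hzy⟩, rfl⟩
    refine ⟨?_, mem_image_of_mem φ hz⟩
    rw [mem_ball] at hzy ⊢
    calc dist (φ z) (φ y) ≤ L * dist z y := hL.dist_le_mul z (subset_closure hz) y hy
      _ < L * (r / L) := by gcongr
      _ = r := mul_div_cancel₀ r (by positivity)
  have key : ENNReal.ofReal (K ^ k) * ENNReal.ofReal (ω * (t / (K * L)) ^ k * r ^ k)
      ≤ ENNReal.ofReal (K ^ k) * μH[k] (ball (φ y) r ∩ φ '' G) :=
    calc ENNReal.ofReal (K ^ k) * ENNReal.ofReal (ω * (t / (K * L)) ^ k * r ^ k)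
        = μH[k] (ball p (t * (r / L))) := by
          rw [hball p _ (by positivity), ← ENNReal.ofReal_mul (by positivity)]
          congr 1
          simp only [mul_pow, div_pow]
          field_simp
      _ ≤ μH[k] (G ∩ ball y (r / L)) := measure_mono hp
      _ ≤ (K : ℝ≥0∞) ^ (k : ℝ) * μH[k] (φ '' (G ∩ ball y (r / L))) :=
          AntilipschitzWith.le_hausdorffMeasure_image_of_domRestrict hK
            (inter_subset_left.trans subset_closure) (Nat.cast_nonneg k)
      _ ≤ ENNReal.ofReal (K ^ k) * μH[k] (ball (φ y) r ∩ φ '' G) := by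
          rw [show (K : ℝ≥0∞) ^ (k : ℝ) = ENNReal.ofReal (K ^ k) by simp]
          gcongr
  exact (ENNReal.mul_le_mul_iff_right (by positivity) ENNReal.ofReal_ne_top).1 key

end Density

theorem spt_restrict_subset_closure {n : ℕ} (μ : Measure (EuclideanSpace ℝ (Fin n)))
    (s : Set (EuclideanSpace ℝ (Fin n))) : spt (μ.restrict s) ⊆ closure s := by
  intro x hx
  rw [Metric.mem_closure_iff]
  intro ε hε
  have := hx ε hε
  rw [Measure.restrict_apply measurableSet_ball] at this
  obtain ⟨y, hy, hys⟩ := nonempty_of_measure_ne_zero this.ne'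
  exact ⟨y, hys, mem_ball'.1 hy⟩

theorem stmt_15_general {k n : ℕ}
    (G : Set (EuclideanSpace ℝ (Fin k)))
    (hGbdd : Bornology.IsBounded G)
    (hGbdry : ∀ x ∈ frontier G, ∃ f : EuclideanSpace ℝ (Fin k) → ℝ,
      ContDiffAt ℝ 1 f x ∧ fderiv ℝ f x ≠ 0 ∧ ∀ᶠ y in nhds x, (y ∈ G ↔ f y < 0))
    (φ : EuclideanSpace ℝ (Fin k) → EuclideanSpace ℝ (Fin n))
    (hφ : ContDiff ℝ 1 φ) (hinj : Set.InjOn φ (closure G))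
    (hJ : ∀ y ∈ closure G, 0 < (Matrix.transpose (Dmat φ y) * Dmat φ y).det) :
    ∃ C rbar : ℝ, 0 < C ∧ 0 < rbar ∧
      ∀ x ∈ spt ((Measure.hausdorffMeasure (k : ℝ)).restrict (φ '' G)), ∀ r : ℝ, 0 < r → r ≤ rbar →
        ENNReal.ofReal (r ^ (k : ℕ) / C) ≤ (Measure.hausdorffMeasure (k : ℝ)).restrict (φ '' G) (Metric.ball x r) ∧
          (Measure.hausdorffMeasure (k : ℝ)).restrict (φ '' G) (Metric.ball x r) ≤
            ENNReal.ofReal (C * r ^ (k : ℕ)) := by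
  have hGc : IsCompact (closure G) := hGbdd.isCompact_closure
  obtain ⟨K, hK0, hK⟩ := hφ.exists_antilipschitzWith_domRestrict hGc hinj
    fun y hy => injective_fderiv_of_det_ne_zero (hJ y hy).ne'
  obtain ⟨L, hL⟩ := hφ.locallyLipschitz.locallyLipschitzOn.exists_lipschitzOnWith_of_compact hGc
  replace hL := hL.weaken (le_add_of_nonneg_right zero_le_one : L ≤ L + 1)
  obtain ⟨t, ht, hballs⟩ := hGc.exists_interiorBallCondition_closure hGbdry
  obtain ⟨a, ha, hlow⟩ :=
    exists_le_hausdorffMeasure_ball_inter_image hL hK hK0 (by positivity) hballs ht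
  obtain ⟨b, hb, hup⟩ := exists_hausdorffMeasure_ball_inter_image_le hL hK hK0 (by positivity)
  refine ⟨max a⁻¹ b, (L + 1 : ℝ≥0) * t, by positivity, by positivity, fun x hx r hr hrt => ?_⟩
  obtain ⟨y, hy, rfl⟩ : x ∈ φ '' closure G := by
    rw [image_closure_of_isCompact hGc hφ.continuous.continuousOn]
    exact spt_restrict_subset_closure _ _ hx
  rw [Measure.restrict_apply measurableSet_ball]
  refine ⟨(ENNReal.ofReal_le_ofReal ?_).trans (hlow y hy r hr hrt),
    (hup y hy r hr).trans (ENNReal.ofReal_le_ofReal ?_)⟩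
  · calc r ^ k / max a⁻¹ b ≤ r ^ k / a⁻¹ := by gcongr; exact le_max_left _ _
      _ = a * r ^ k := by rw [div_inv_eq_mul, mul_comm]
  · gcongr
    exact le_max_right _ _

theorem stmt_15 {k n : ℕ} (hkn : k ≤ n)
    (G : Set (EuclideanSpace ℝ (Fin k))) (hGopen : IsOpen G)
    (hGbdd : Bornology.IsBounded G)
    (hGbdry : ∀ x ∈ frontier G, ∃ f : EuclideanSpace ℝ (Fin k) → ℝ,
      ContDiffAt ℝ 1 f x ∧ fderiv ℝ f x ≠ 0 ∧ ∀ᶠ y in nhds x, (y ∈ G ↔ f y < 0))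
    (φ : EuclideanSpace ℝ (Fin k) → EuclideanSpace ℝ (Fin n))
    (hφ : ContDiff ℝ 1 φ) (hinj : Set.InjOn φ (closure G))
    (hJ : ∀ y ∈ closure G, 0 < (Matrix.transpose (Dmat φ y) * Dmat φ y).det) :
    ∃ C rbar : ℝ, 0 < C ∧ 0 < rbar ∧
      ∀ x ∈ spt ((Measure.hausdorffMeasure (k : ℝ)).restrict (φ '' G)), ∀ r : ℝ, 0 < r → r ≤ rbar →
        ENNReal.ofReal (r ^ (k : ℕ) / C) ≤ (Measure.hausdorffMeasure (k : ℝ)).restrict (φ '' G) (Metric.ball x r) ∧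
          (Measure.hausdorffMeasure (k : ℝ)).restrict (φ '' G) (Metric.ball x r) ≤
            ENNReal.ofReal (C * r ^ (k : ℕ)) :=
  stmt_15_general G hGbdd hGbdry φ hφ hinj hJ
end
end

section
/- Let G ⊂ ℝ^k be bounded open, φ ∈ C¹(ℝ^k, ℝ^n) with φ|_G an imbedding (k ≤ n), and set μ := H^k ⌞ φ(G). Then for every E ⊂ ℝ^n and h ∈ [0,∞): E^{μ,h} ∩ φ(G) = φ( [φ^{-1}(E)]^{(k+h)} ∩ G ), where for S ⊂ ℝ^k, S^{(m)} denotes the set of m-density points of S, i.e., points y with L^k(B_r(y) \ S) = o(r^m) as r → 0+. -/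
open MeasureTheory Metric Filter Set Topology

noncomputable section

/-- The set of `m`-density points of `S ⊆ ℝ^k` with respect to Lebesgue measure:
points `y` with `L^k(B_r(y) \ S) = o(r^m)` as `r → 0+`. -/
def densityPts {k : ℕ} (m : ℝ) (S : Set (EuclideanSpace ℝ (Fin k))) :
    Set (EuclideanSpace ℝ (Fin k)) :=
  {y | Filter.Tendsto (fun r : ℝ => volume (Metric.ball y r \ S) / ENNReal.ofReal (r ^ m))
      (nhdsWithin 0 (Set.Ioi 0)) (nhds 0)}

open scoped ENNReal NNReal

/-!
At a point `y₀ ∈ G` the differential of `φ` is injective (`Jφ(y₀) > 0`), so `φ` is bi-Lipschitz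
on a neighbourhood `U` of `y₀`; since `φ|_G` is an embedding, `φ(G)` meets small balls around
`φ y₀` only in `φ(U)`. Bi-Lipschitz maps distort `H^k` by bounded factors, and `H^k = c L^k` on
`ℝ^k`, so `μ(B_r(φ y₀) \ E)` lies between constant multiples of `L^k(B_{r/C}(y₀) \ φ⁻¹E)` and
`L^k(B_{Kr}(y₀) \ φ⁻¹E)`, while `μ(B_r(φ y₀)) ≍ r^k`. Changing `r` by a fixed factor does not
affect a quantity being `o(r^{k+h})`, so the two density conditions agree.
-/

theorem HasStrictFDerivAt.exists_mem_nhds_lipschitzWith_antilipschitzWith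
    {E F : Type*} [NormedAddCommGroup E] [NormedSpace ℝ E] [FiniteDimensional ℝ E]
    [NormedAddCommGroup F] [NormedSpace ℝ F] {f : E → F} {f' : E →L[ℝ] F} {a : E}
    (hf : HasStrictFDerivAt f f' a) (hf' : Function.Injective f') :
    ∃ s ∈ 𝓝 a, ∃ C K : ℝ≥0, 0 < C ∧ 0 < K ∧
      LipschitzWith C (s.domRestrict f) ∧ AntilipschitzWith K (s.domRestrict f) := by
  obtain ⟨K₀, hK₀, hf'K₀⟩ :=
    (f' : E →ₗ[ℝ] F).exists_antilipschitzWith (LinearMap.ker_eq_bot.mpr hf')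
  have hc : (2 * K₀)⁻¹ < K₀⁻¹ :=
    NNReal.inv_lt_inv hK₀.ne' (by simpa [two_mul] using hK₀)
  obtain ⟨s, hs, hfs⟩ := hf.approximates_deriv_on_nhds (c := (2 * K₀)⁻¹) (Or.inr (by positivity))
  refine ⟨s, hs, _, _, by positivity, inv_pos.mpr (tsub_pos_of_lt hc), hfs.lipschitz, ?_⟩
  convert! (hf'K₀.domRestrict s).add_lipschitzWith hfs.lipschitz_sub hc
  simp [Set.domRestrict]

theorem AntilipschitzWith.hausdorffMeasure_le_mul_image
    {X Y : Type*} [EMetricSpace X] [EMetricSpace Y] [MeasurableSpace X] [BorelSpace X]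
    [MeasurableSpace Y] [BorelSpace Y] {f : X → Y} {U T : Set X} {K : ℝ≥0}
    (hf : AntilipschitzWith K (U.domRestrict f)) {d : ℝ} (hd : 0 ≤ d) (hT : T ⊆ U) :
    μH[d] T ≤ (K : ℝ≥0∞) ^ d * μH[d] (f '' T) := by
  have himage : ∀ S : Set X, S ⊆ U → (Subtype.val '' (Subtype.val ⁻¹' S : Set U)) = S := by
    intro S hS; simpa using hS
  have := hf.le_hausdorffMeasure_image hd (Subtype.val ⁻¹' T)
  rwa [← isometry_subtype_coe.hausdorffMeasure_image (Or.inl hd), himage T hT,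
    Set.domRestrict_eq, image_comp, himage T hT] at this

theorem Topology.IsEmbedding.exists_ball_inter_image_subset
    {X Y : Type*} [TopologicalSpace X] [PseudoMetricSpace Y] {G U : Set X} {φ : X → Y}
    (hemb : IsEmbedding (G.domRestrict φ)) {y₀ : X} (hy₀ : y₀ ∈ G) (hU : U ∈ 𝓝 y₀) :
    ∃ ε > 0, φ '' G ∩ ball (φ y₀) ε ⊆ φ '' (U ∩ G) := by
  have : Subtype.val ⁻¹' U ∈ 𝓝 (⟨y₀, hy₀⟩ : G) := continuous_subtype_val.continuousAt hU
  rw [hemb.isInducing.nhds_eq_comap] at this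
  obtain ⟨V, hV, hVU⟩ := this
  obtain ⟨ε, hε, hεV⟩ := Metric.mem_nhds_iff.mp hV
  refine ⟨ε, hε, ?_⟩
  rintro _ ⟨⟨y, hy, rfl⟩, hyε⟩
  exact ⟨y, ⟨hVU (show (⟨y, hy⟩ : G) ∈ G.domRestrict φ ⁻¹' V from hεV hyε), hy⟩, rfl⟩

section BiLipschitz

variable {X Y : Type*} [MetricSpace X] [MetricSpace Y] [MeasurableSpace X] [BorelSpace X]
  [MeasurableSpace Y] [BorelSpace Y] {φ : X → Y} {U : Set X} {C K : ℝ≥0} {y₀ : X} {d : ℝ}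

theorem hausdorffMeasure_ball_diff_preimage_le (hd : 0 ≤ d)
    (hlip : LipschitzWith C (U.domRestrict φ)) (hanti : AntilipschitzWith K (U.domRestrict φ))
    (hC : 0 < C) {G : Set X} {r : ℝ} (hr : ball y₀ r ⊆ U ∩ G) (A : Set Y) :
    μH[d] (ball y₀ r \ φ ⁻¹' A) ≤ (K : ℝ≥0∞) ^ d * μH[d] ((ball (φ y₀) (C * r) \ A) ∩ φ '' G) := by
  have hT : ball y₀ r \ φ ⁻¹' A ⊆ U := sdiff_subset.trans (hr.trans inter_subset_left)
  refine (hanti.hausdorffMeasure_le_mul_image hd hT).trans (mul_le_mul_right (measure_mono ?_) _)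
  rintro _ ⟨t, ⟨ht, htA⟩, rfl⟩
  have hy₀ : y₀ ∈ U := (hr (mem_ball_self (pos_of_mem_ball ht))).1
  have hdist : dist (φ t) (φ y₀) ≤ C * dist t y₀ :=
    hlip.dist_le_mul ⟨t, hT ⟨ht, htA⟩⟩ ⟨y₀, hy₀⟩
  refine ⟨⟨hdist.trans_lt (mul_lt_mul_of_pos_left ht hC), htA⟩, mem_image_of_mem φ (hr ht).2⟩

theorem hausdorffMeasure_ball_diff_inter_image_le (hd : 0 ≤ d)
    (hlip : LipschitzWith C (U.domRestrict φ)) (hanti : AntilipschitzWith K (U.domRestrict φ))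
    (hK : 0 < K) (hy₀ : y₀ ∈ U) {G : Set X} {r : ℝ} (hr : φ '' G ∩ ball (φ y₀) r ⊆ φ '' U)
    (A : Set Y) :
    μH[d] ((ball (φ y₀) r \ A) ∩ φ '' G) ≤ (C : ℝ≥0∞) ^ d * μH[d] (ball y₀ (K * r) \ φ ⁻¹' A) := by
  set T := U ∩ φ ⁻¹' (ball (φ y₀) r \ A)
  have hcover : (ball (φ y₀) r \ A) ∩ φ '' G ⊆ φ '' T := by
    rintro _ ⟨⟨hx, hxA⟩, hxG⟩
    obtain ⟨t, ht, rfl⟩ := hr ⟨hxG, hx⟩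
    exact ⟨t, ⟨ht, hx, hxA⟩, rfl⟩
  have hTball : T ⊆ ball y₀ (K * r) \ φ ⁻¹' A := by
    rintro t ⟨ht, hx, hxA⟩
    have hdist : dist t y₀ ≤ K * dist (φ t) (φ y₀) := hanti.le_mul_dist ⟨t, ht⟩ ⟨y₀, hy₀⟩
    exact ⟨hdist.trans_lt (mul_lt_mul_of_pos_left hx hK), hxA⟩
  calc μH[d] ((ball (φ y₀) r \ A) ∩ φ '' G) ≤ μH[d] (φ '' T) := measure_mono hcover
    _ ≤ (C : ℝ≥0∞) ^ d * μH[d] T :=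
      ((lipschitzOnWith_iff_restrict.mpr hlip).mono inter_subset_left).hausdorffMeasure_image_le hd
    _ ≤ (C : ℝ≥0∞) ^ d * μH[d] (ball y₀ (K * r) \ φ ⁻¹' A) := by gcongr

end BiLipschitz

section LocalComparison

variable {E F : Type*} [NormedAddCommGroup E] [NormedSpace ℝ E] [FiniteDimensional ℝ E]
  [MeasurableSpace E] [BorelSpace E] [NormedAddCommGroup F] [NormedSpace ℝ F]
  [MeasurableSpace F] [BorelSpace F]

theorem exists_eventually_hausdorffMeasure_ball_diff_comparable {G : Set E} (hG : IsOpen G)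
    {φ : E → F} (hemb : IsEmbedding (G.domRestrict φ)) {y₀ : E} (hy₀ : y₀ ∈ G) {f' : E →L[ℝ] F}
    (hf : HasStrictFDerivAt φ f' y₀) (hf' : Function.Injective f') {d : ℝ} (hd : 0 ≤ d) :
    ∃ C K : ℝ≥0, 0 < C ∧ 0 < K ∧ ∀ᶠ r in 𝓝[>] 0, ∀ A : Set F,
      μH[d] (ball y₀ r \ φ ⁻¹' A) ≤
          (K : ℝ≥0∞) ^ d * μH[d].restrict (φ '' G) (ball (φ y₀) (C * r) \ A) ∧
        μH[d].restrict (φ '' G) (ball (φ y₀) r \ A) ≤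
          (C : ℝ≥0∞) ^ d * μH[d] (ball y₀ (K * r) \ φ ⁻¹' A) := by
  obtain ⟨U, hU, C, K, hC, hK, hlip, hanti⟩ :=
    hf.exists_mem_nhds_lipschitzWith_antilipschitzWith hf'
  obtain ⟨ε, hε, hεU⟩ := hemb.exists_ball_inter_image_subset hy₀ hU
  obtain ⟨δ, hδ, hδU⟩ := Metric.mem_nhds_iff.mp (inter_mem hU (hG.mem_nhds hy₀))
  have hGm : MeasurableSet (φ '' G) :=
    hG.measurableSet.image_of_continuousOn_injOn
      (continuousOn_iff_continuous_domRestrict.mpr hemb.continuous)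
      (injOn_iff_injective.mpr hemb.injective)
  refine ⟨C, K, hC, hK, ?_⟩
  filter_upwards [Ioo_mem_nhdsGT (lt_min hε hδ)] with r hr A
  rw [Measure.restrict_apply' hGm, Measure.restrict_apply' hGm]
  constructor
  · exact hausdorffMeasure_ball_diff_preimage_le hd hlip hanti hC
      ((ball_subset_ball (hr.2.le.trans (min_le_right _ _))).trans hδU) A
  · refine hausdorffMeasure_ball_diff_inter_image_le hd hlip hanti hK (mem_of_mem_nhds hU)
      (fun x hx => ?_) A
    obtain ⟨y, hy, rfl⟩ := hεU ⟨hx.1, ball_subset_ball (hr.2.le.trans (min_le_left _ _)) hx.2⟩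
    exact mem_image_of_mem φ hy.1

end LocalComparison

section Asymptotics

theorem ENNReal.div_le_mul_div_of_le_mul {a b b' c : ℝ≥0∞} (hc₀ : c ≠ 0) (hc : c ≠ ⊤)
    (h : b ≤ c * b') : a / b' ≤ c * (a / b) :=
  calc a / b' = c * a / (c * b') := (ENNReal.mul_div_mul_left _ _ hc₀ hc).symm
    _ ≤ c * a / b := ENNReal.div_le_div_left h _
    _ = c * (a / b) := mul_div_assoc _ _ _

variable {α : Type*} {l : Filter α}

theorem ENNReal.tendsto_zero_of_eventually_le_mul {f g : α → ℝ≥0∞} {c : ℝ≥0∞} (hc : c ≠ ⊤)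
    (hg : Tendsto g l (𝓝 0)) (hfg : ∀ᶠ r in l, f r ≤ c * g r) : Tendsto f l (𝓝 0) := by
  have hcg := ENNReal.Tendsto.const_mul hg (Or.inr hc)
  rw [mul_zero] at hcg
  exact tendsto_of_tendsto_of_tendsto_of_le_of_le' tendsto_const_nhds hcg
    (Eventually.of_forall fun _ => zero_le) hfg

theorem ENNReal.tendsto_div_mul_of_le_mul {f m ω v : α → ℝ≥0∞} {a : ℝ≥0∞}
    (h : Tendsto (fun r => f r / (m r * v r)) l (𝓝 0)) (ha : a ≠ ⊤)
    (hmω : ∀ᶠ r in l, m r ≤ a * ω r) : Tendsto (fun r => f r / (ω r * v r)) l (𝓝 0) := by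
  refine ENNReal.tendsto_zero_of_eventually_le_mul (c := max a 1) (by simp [ha]) h ?_
  filter_upwards [hmω] with r hr
  refine ENNReal.div_le_mul_div_of_le_mul (by positivity) (by simp [ha]) ?_
  calc m r * v r ≤ a * ω r * v r := by gcongr
    _ ≤ max a 1 * (ω r * v r) := by rw [mul_assoc]; gcongr; exact le_max_left _ _

theorem ENNReal.tendsto_div_ofReal_rpow_of_le_mul_comp_mul {f g : ℝ → ℝ≥0∞} {p K : ℝ}
    {b : ℝ≥0∞} (hg : Tendsto (fun r => g r / ENNReal.ofReal (r ^ p)) (𝓝[>] 0) (𝓝 0))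
    (hfg : ∀ᶠ r in 𝓝[>] 0, f r ≤ b * g (K * r)) (hb : b ≠ ⊤) (hK : 0 < K) :
    Tendsto (fun r => f r / ENNReal.ofReal (r ^ p)) (𝓝[>] 0) (𝓝 0) := by
  have hgK : Tendsto (fun r => g (K * r) / ENNReal.ofReal ((K * r) ^ p)) (𝓝[>] 0) (𝓝 0) :=
    hg.comp (tendsto_iff_comap.mpr (comap_mulLeft_nhdsGT_zero hK).ge)
  refine ENNReal.tendsto_zero_of_eventually_le_mul (c := b * ENNReal.ofReal (K ^ p))
    (by finiteness) hgK ?_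
  filter_upwards [hfg, self_mem_nhdsWithin] with r hr (hr₀ : 0 < r)
  have hpow : ENNReal.ofReal ((K * r) ^ p) = ENNReal.ofReal (K ^ p) * ENNReal.ofReal (r ^ p) := by
    rw [Real.mul_rpow hK.le hr₀.le, ENNReal.ofReal_mul (by positivity)]
  calc f r / ENNReal.ofReal (r ^ p) ≤ b * g (K * r) / ENNReal.ofReal (r ^ p) := by gcongr
    _ = b * (g (K * r) / ENNReal.ofReal (r ^ p)) := mul_div_assoc _ _ _
    _ ≤ b * (ENNReal.ofReal (K ^ p) * (g (K * r) / ENNReal.ofReal ((K * r) ^ p))) := by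
      gcongr
      exact ENNReal.div_le_mul_div_of_le_mul (by simpa using Real.rpow_pos_of_pos hK p)
        ENNReal.ofReal_ne_top hpow.le
    _ = b * ENNReal.ofReal (K ^ p) * (g (K * r) / ENNReal.ofReal ((K * r) ^ p)) :=
      (mul_assoc _ _ _).symm

end Asymptotics

theorem exists_eventually_measure_ball_comparable_pow {E Y : Type*} [NormedAddCommGroup E]
    [NormedSpace ℝ E] [FiniteDimensional ℝ E] [MeasurableSpace E] [BorelSpace E]
    [PseudoMetricSpace Y] [MeasurableSpace Y] (ν : Measure E) [ν.IsAddHaarMeasure]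
    (μ : Measure Y) {y₀ : E} {x : Y} {C K : ℝ} (hC : 0 < C) (hK : 0 < K) {a b : ℝ≥0∞}
    (ha : a ≠ ⊤) (hb : b ≠ ⊤)
    (hlow : ∀ᶠ r in 𝓝[>] 0, ν (ball y₀ r) ≤ a * μ (ball x (C * r)))
    (hup : ∀ᶠ r in 𝓝[>] 0, μ (ball x r) ≤ b * ν (ball y₀ (K * r))) :
    ∃ a' ≠ ⊤, ∃ b' ≠ ⊤, ∀ᶠ r in 𝓝[>] 0,
      μ (ball x r) ≤ b' * ENNReal.ofReal (r ^ Module.finrank ℝ E) ∧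
        ENNReal.ofReal (r ^ Module.finrank ℝ E) ≤ a' * μ (ball x r) := by
  set d := Module.finrank ℝ E
  set ι := ν (ball 0 1)
  have hι₀ : ι ≠ 0 := (measure_ball_pos ν 0 one_pos).ne'
  have hι : ι ≠ ⊤ := measure_ball_lt_top.ne
  refine ⟨ENNReal.ofReal (C ^ d) * ι⁻¹ * a,
    ENNReal.mul_ne_top (ENNReal.mul_ne_top ENNReal.ofReal_ne_top (ENNReal.inv_ne_top.mpr hι₀)) ha,
    b * ENNReal.ofReal (K ^ d) * ι, by finiteness, ?_⟩
  filter_upwards [hup, eventually_nhdsGT_zero_mul_left (inv_pos.mpr hC) hlow,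
    self_mem_nhdsWithin] with r hup hlow (hr : 0 < r)
  rw [ν.addHaar_ball_of_pos _ (mul_pos hK hr)] at hup
  rw [ν.addHaar_ball_of_pos _ (mul_pos (inv_pos.mpr hC) hr), mul_inv_cancel_left₀ hC.ne'] at hlow
  constructor
  · calc μ (ball x r) ≤ b * (ENNReal.ofReal ((K * r) ^ d) * ι) := hup
      _ = b * ENNReal.ofReal (K ^ d) * ι * ENNReal.ofReal (r ^ d) := by
        rw [mul_pow, ENNReal.ofReal_mul (by positivity)]; ring
  · have hCd :
        ENNReal.ofReal (C ^ d) * ENNReal.ofReal ((C⁻¹ * r) ^ d) = ENNReal.ofReal (r ^ d) := by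
      rw [← ENNReal.ofReal_mul (by positivity), ← mul_pow, mul_inv_cancel_left₀ hC.ne']
    calc ENNReal.ofReal (r ^ d)
        = ENNReal.ofReal (C ^ d) * ι⁻¹ * (ENNReal.ofReal ((C⁻¹ * r) ^ d) * ι) := by
          rw [← hCd, mul_comm _ ι, ← mul_assoc, mul_assoc _ ι⁻¹ ι, ENNReal.inv_mul_cancel hι₀ hι,
            mul_one]
      _ ≤ ENNReal.ofReal (C ^ d) * ι⁻¹ * (a * μ (ball x r)) := by gcongr
      _ = ENNReal.ofReal (C ^ d) * ι⁻¹ * a * μ (ball x r) := (mul_assoc _ _ _).symm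

theorem mem_spt_of_eventually_pow_le_mul {n k : ℕ} {μ : Measure (EuclideanSpace ℝ (Fin n))}
    {x : EuclideanSpace ℝ (Fin n)} {a : ℝ≥0∞}
    (h : ∀ᶠ r in 𝓝[>] 0, ENNReal.ofReal (r ^ k) ≤ a * μ (ball x r)) : x ∈ spt μ := by
  intro r hr
  obtain ⟨r', ⟨hr', hr'₀⟩, -, hr'r⟩ := ((h.and self_mem_nhdsWithin).and (Ioo_mem_nhdsGT hr)).exists
  refine (pos_iff_ne_zero.mpr fun h0 => ?_).trans_le (measure_mono (ball_subset_ball hr'r.le))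
  rw [h0, mul_zero, nonpos_iff_eq_zero, ENNReal.ofReal_eq_zero] at hr'
  exact (pow_pos hr'₀ k).not_ge hr'

theorem toLpLin_Dmat {k n : ℕ} (φ : EuclideanSpace ℝ (Fin k) → EuclideanSpace ℝ (Fin n))
    (y : EuclideanSpace ℝ (Fin k)) :
    Matrix.toLpLin 2 2 (Dmat φ y) = (fderiv ℝ φ y : _ →ₗ[ℝ] _) := by
  refine (EuclideanSpace.basisFun (Fin k) ℝ).toBasis.ext fun j => ?_
  ext i
  simp [Dmat, Matrix.toLpLin_apply]

theorem injective_fderiv_of_det_pos {k n : ℕ}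
    {φ : EuclideanSpace ℝ (Fin k) → EuclideanSpace ℝ (Fin n)} {y : EuclideanSpace ℝ (Fin k)}
    (hJ : 0 < (Matrix.transpose (Dmat φ y) * Dmat φ y).det) :
    Function.Injective (fderiv ℝ φ y) := by
  have hgram : Function.Injective (Matrix.transpose (Dmat φ y) * Dmat φ y).mulVec :=
    Matrix.mulVec_injective_iff_isUnit.mpr ((Matrix.isUnit_iff_isUnit_det _).mpr hJ.ne'.isUnit)
  have hD : Function.Injective (Dmat φ y).mulVec := by
    refine Function.Injective.of_comp (f := (Matrix.transpose (Dmat φ y)).mulVec) ?_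
    simpa [Function.comp_def, Matrix.mulVec_mulVec] using hgram
  have hLp : Function.Injective (Matrix.toLpLin 2 2 (Dmat φ y)) := fun v w hvw =>
    WithLp.ofLp_injective 2 (hD (by simpa [Matrix.toLpLin_apply] using hvw))
  rwa [toLpLin_Dmat] at hLp

theorem mem_sdp_iff_mem_densityPts {k n : ℕ} {G : Set (EuclideanSpace ℝ (Fin k))}
    (hG : IsOpen G) {φ : EuclideanSpace ℝ (Fin k) → EuclideanSpace ℝ (Fin n)}
    (hemb : IsEmbedding (fun y : G => φ y)) {y₀ : EuclideanSpace ℝ (Fin k)} (hy₀ : y₀ ∈ G)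
    (hφ : ContDiffAt ℝ 1 φ y₀) (hJ : 0 < (Matrix.transpose (Dmat φ y₀) * Dmat φ y₀).det)
    (E : Set (EuclideanSpace ℝ (Fin n))) (h : ℝ) :
    φ y₀ ∈ sdp ((Measure.hausdorffMeasure (k : ℝ)).restrict (φ '' G)) h E ↔
      y₀ ∈ densityPts ((k : ℝ) + h) (φ ⁻¹' E) := by
  obtain ⟨C, K, hC, hK, hcomp⟩ :=
    exists_eventually_hausdorffMeasure_ball_diff_comparable hG hemb hy₀
      (hφ.hasStrictFDerivAt one_ne_zero) (injective_fderiv_of_det_pos hJ) (Nat.cast_nonneg k)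
  simp only [ENNReal.rpow_natCast] at hcomp
  set μ := (Measure.hausdorffMeasure (k : ℝ)).restrict (φ '' G)
  set ν : Measure (EuclideanSpace ℝ (Fin k)) := μH[k]
  obtain ⟨a, ha, b, hb, hmass⟩ := exists_eventually_measure_ball_comparable_pow ν μ
    (C := C) (K := K) (a := K ^ k) (b := C ^ k) (by positivity) (by positivity) (by finiteness)
    (by finiteness) (hcomp.mono fun r hr => by simpa using (hr ∅).1)
    (hcomp.mono fun r hr => by simpa using (hr ∅).2)
  simp only [finrank_euclideanSpace_fin] at hmass
  have hspt : φ y₀ ∈ spt μ := mem_spt_of_eventually_pow_le_mul (hmass.mono fun r hr => hr.2)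
  have hpow : ∀ᶠ r : ℝ in 𝓝[>] 0,
      ENNReal.ofReal (r ^ k) * ENNReal.ofReal (r ^ h) = ENNReal.ofReal (r ^ ((k : ℝ) + h)) := by
    filter_upwards [self_mem_nhdsWithin] with r (hr : 0 < r)
    rw [← ENNReal.ofReal_mul (by positivity), Real.rpow_add hr, Real.rpow_natCast]
  have hvol : ∀ s, volume s = Measure.addHaarScalarFactor volume ν * ν s := fun s => by
    conv_lhs => rw [Measure.isAddLeftInvariant_eq_smul volume ν]
    rfl
  have hν : ∀ s, ν s = Measure.addHaarScalarFactor ν volume * volume s := fun s => by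
    conv_lhs => rw [Measure.isAddLeftInvariant_eq_smul ν volume]
    rfl
  have hnum₁ : ∀ᶠ r in 𝓝[>] 0, volume (ball y₀ r \ φ ⁻¹' E) ≤
      Measure.addHaarScalarFactor volume ν * K ^ k * μ (ball (φ y₀) (C * r) \ E) :=
    hcomp.mono fun r hr => by rw [hvol, mul_assoc]; gcongr; exact (hr E).1
  have hnum₂ : ∀ᶠ r in 𝓝[>] 0, μ (ball (φ y₀) r \ E) ≤
      C ^ k * Measure.addHaarScalarFactor ν volume * volume (ball y₀ (K * r) \ φ ⁻¹' E) :=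
    hcomp.mono fun r hr => (hr E).2.trans_eq (by rw [hν, mul_assoc])
  simp only [sdp, densityPts, Set.mem_ofPred_eq, hspt, true_and]
  constructor
  · intro hsdp
    have hdiv := ENNReal.tendsto_div_mul_of_le_mul hsdp hb (hmass.mono fun r hr => hr.1)
    exact ENNReal.tendsto_div_ofReal_rpow_of_le_mul_comp_mul
      (hdiv.congr' (hpow.mono fun r hr => by rw [hr])) hnum₁ (by finiteness) (by positivity)
  · intro hdens
    have hdiv := ENNReal.tendsto_div_ofReal_rpow_of_le_mul_comp_mul hdens hnum₂ (by finiteness)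
      (by positivity)
    have hdiv' : Tendsto (fun r => μ (ball (φ y₀) r \ E) /
        (ENNReal.ofReal (r ^ k) * ENNReal.ofReal (r ^ h))) (𝓝[>] 0) (𝓝 0) :=
      hdiv.congr' (hpow.mono fun r hr => by simp only [hr])
    exact ENNReal.tendsto_div_mul_of_le_mul hdiv' ha (hmass.mono fun r hr => hr.2)

theorem stmt_16_general {k n : ℕ}
    (G : Set (EuclideanSpace ℝ (Fin k))) (hGopen : IsOpen G)
    (φ : EuclideanSpace ℝ (Fin k) → EuclideanSpace ℝ (Fin n))
    (hφ : ContDiff ℝ 1 φ)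
    (hemb : Topology.IsEmbedding (fun y : G => φ y))
    (hJ : ∀ y ∈ G, 0 < (Matrix.transpose (Dmat φ y) * Dmat φ y).det)
    (E : Set (EuclideanSpace ℝ (Fin n))) (h : ℝ) :
    sdp ((Measure.hausdorffMeasure (k : ℝ)).restrict (φ '' G)) h E ∩ φ '' G =
      φ '' (densityPts ((k : ℝ) + h) (φ ⁻¹' E) ∩ G) := by
  have key : ∀ y ∈ G, φ y ∈ sdp ((Measure.hausdorffMeasure (k : ℝ)).restrict (φ '' G)) h E ↔
      y ∈ densityPts ((k : ℝ) + h) (φ ⁻¹' E) := fun y hy =>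
    mem_sdp_iff_mem_densityPts hGopen hemb hy hφ.contDiffAt (hJ y hy) E h
  ext x
  constructor
  · rintro ⟨hx, y, hy, rfl⟩
    exact ⟨y, ⟨(key y hy).mp hx, hy⟩, rfl⟩
  · rintro ⟨y, ⟨hyE, hy⟩, rfl⟩
    exact ⟨(key y hy).mpr hyE, mem_image_of_mem φ hy⟩

theorem stmt_16 {k n : ℕ} (hkn : k ≤ n)
    (G : Set (EuclideanSpace ℝ (Fin k))) (hGopen : IsOpen G)
    (hGbdd : Bornology.IsBounded G)
    (φ : EuclideanSpace ℝ (Fin k) → EuclideanSpace ℝ (Fin n))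
    (hφ : ContDiff ℝ 1 φ)
    (hemb : Topology.IsEmbedding (fun y : G => φ y))
    (hJ : ∀ y ∈ G, 0 < (Matrix.transpose (Dmat φ y) * Dmat φ y).det)
    (E : Set (EuclideanSpace ℝ (Fin n))) (h : ℝ) (hh : 0 ≤ h) :
    sdp ((Measure.hausdorffMeasure (k : ℝ)).restrict (φ '' G)) h E ∩ φ '' G =
      φ '' (densityPts ((k : ℝ) + h) (φ ⁻¹' E) ∩ G) :=
  stmt_16_general G hGopen φ hφ hemb hJ E h
end
end

section
/- Let μ be a Radon outer measure on ℝ^n with spt μ ≠ ∅ and E ⊂ ℝ^n. Define the density degree d_E^μ: ℝ^n → {−n} ∪ [0,∞] by d_E^μ(x) = sup{ h ∈ [0,∞) : x ∈ E^{μ,h} } if x ∈ E^{μ,0}, and d_E^μ(x) = −n otherwise. Then d_E^μ is a μ-measurable function (indeed each superlevel set {x : d_E^μ(x) ≥ a} is μ-measurable for every a ∈ ℝ). -/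
/-!
`E^{μ,h} = spt μ \ b^{μ,h}(ℝⁿ \ E)`, and `x ∈ b^{μ,h}(A)` iff `x ∈ spt μ` and for some `m` and every
`k` there is `r < 1/(k+1)` with `(m+1)⁻¹ μ(B(x,r)) r^h < μ(B(x,r) ∩ A)`. For fixed `m`, `k` this
condition is open in `x`, since `x ↦ μ(B(x,r) ∩ A)` is lower semicontinuous and `x ↦ μ(B̄(x,q))` is
upper semicontinuous for the locally finite `μ`; so `b^{μ,h}(A)` is Borel. The superlevel sets of
`d_E^μ` are `ℝⁿ`, `E^{μ,0}`, or `⋂ {E^{μ,q} | q ∈ ℚ ∩ [0,a)}`, all Borel.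
-/

open MeasureTheory Metric Filter Set Topology

noncomputable section

/-- The density degree of `E` with respect to `μ`, with values in `{-n} ∪ [0,∞] ⊆ EReal`. -/
def densityDegree {n : ℕ} (μ : Measure (EuclideanSpace ℝ (Fin n)))
    (E : Set (EuclideanSpace ℝ (Fin n))) (x : EuclideanSpace ℝ (Fin n)) : EReal :=
  @ite _ (x ∈ sdp μ 0 E) (Classical.propDecidable _)
    (sSup ((fun h : ℝ => (h : EReal)) '' {h : ℝ | 0 ≤ h ∧ x ∈ sdp μ h E}))
    (-(n : EReal))

open scoped ENNReal

section MetricMeasure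

variable {X : Type*} [PseudoMetricSpace X] [MeasurableSpace X] (μ : Measure X)

theorem exists_lt_measure_ball_inter_of_lt {x : X} {r : ℝ} {A : Set X} {t : ℝ≥0∞}
    (ht : t < μ (ball x r ∩ A)) : ∃ s < r, t < μ (ball x s ∩ A) := by
  have hmono : Monotone fun k : ℕ => ball x (r - 1 / (k + 1)) ∩ A := fun k l hkl =>
    inter_subset_inter_left _ (ball_subset_ball (by gcongr))
  have hunion : ⋃ k : ℕ, ball x (r - 1 / (k + 1)) ∩ A = ball x r ∩ A := by
    rw [← iUnion_inter]
    congr 1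
    ext y
    simp only [mem_iUnion, mem_ball]
    constructor
    · rintro ⟨k, hk⟩
      linarith [Nat.one_div_pos_of_nat (α := ℝ) (n := k)]
    · intro hy
      obtain ⟨k, hk⟩ := exists_nat_one_div_lt (sub_pos.2 hy)
      exact ⟨k, by linarith⟩
  rw [← hunion, hmono.measure_iUnion] at ht
  obtain ⟨k, hk⟩ := lt_iSup_iff.1 ht
  exact ⟨_, by linarith [Nat.one_div_pos_of_nat (α := ℝ) (n := k)], hk⟩

theorem lowerSemicontinuous_measure_ball_inter (r : ℝ) (A : Set X) :
    LowerSemicontinuous fun x => μ (ball x r ∩ A) := by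
  intro x t ht
  obtain ⟨s, hsr, hs⟩ := exists_lt_measure_ball_inter_of_lt μ ht
  filter_upwards [ball_mem_nhds x (sub_pos.2 hsr)] with y hy
  refine hs.trans_le (measure_mono (inter_subset_inter_left _ (ball_subset_ball' ?_)))
  rw [dist_comm]
  linarith [mem_ball.1 hy]

theorem upperSemicontinuous_measure_closedBall [ProperSpace X] [OpensMeasurableSpace X]
    [IsFiniteMeasureOnCompacts μ] (r : ℝ) : UpperSemicontinuous fun x => μ (closedBall x r) := by
  intro x t ht
  have hlim := tendsto_measure_biInter_gt (μ := μ) (s := closedBall x) (a := r)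
    (fun _ _ => measurableSet_closedBall.nullMeasurableSet)
    (fun _ _ _ hij => closedBall_subset_closedBall hij)
    ⟨r + 1, by linarith, measure_closedBall_lt_top.ne⟩
  rw [biInter_gt_closedBall] at hlim
  obtain ⟨ρ, hρt, hrρ⟩ := ((hlim.eventually (gt_mem_nhds ht)).and self_mem_nhdsWithin).exists
  filter_upwards [ball_mem_nhds x (sub_pos.2 hrρ)] with y hy
  refine (measure_mono (closedBall_subset_closedBall' ?_)).trans_lt hρt
  linarith [mem_ball.1 hy]

theorem UpperSemicontinuous.isOpen_setOf_lt {Y β : Type*} [TopologicalSpace Y] [LinearOrder β]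
    [DenselyOrdered β] {f g : Y → β} (hf : UpperSemicontinuous f) (hg : LowerSemicontinuous g) :
    IsOpen {y | f y < g y} := by
  refine isOpen_iff_mem_nhds.2 fun y hy => ?_
  obtain ⟨t, hft, htg⟩ := exists_between hy
  filter_upwards [hf y t hft, hg y t htg] with z hfz hgz using hfz.trans hgz

theorem isOpen_setOf_exists_mul_measure_ball_lt [ProperSpace X] [OpensMeasurableSpace X]
    [IsFiniteMeasureOnCompacts μ] {h : ℝ} (hh : 0 ≤ h) (A : Set X) {c : ℝ≥0∞} (hc : c ≠ ∞)
    (ε : ℝ) :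
    IsOpen {x | ∃ r ∈ Ioo 0 ε, c * (μ (ball x r) * ENNReal.ofReal (r ^ h)) < μ (ball x r ∩ A)} := by
  refine isOpen_iff_forall_mem_open.2 fun x ⟨r, hr, hx⟩ => ?_
  obtain ⟨s, hsr, hs⟩ := exists_lt_measure_ball_inter_of_lt μ hx
  obtain ⟨q, hsq, hqr⟩ := exists_between (max_lt hsr hr.1)
  have hq0 : 0 < q := (le_max_right s 0).trans_lt hsq
  set K := ENNReal.ofReal (q ^ h)
  -- `μ (ball y q)` is only lower semicontinuous in `y`; replacing it by the larger, upper
  -- semicontinuous `μ (closedBall y q)` makes the strict inequality an open condition.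
  have hV : IsOpen {y | c * (μ (closedBall y q) * K) < μ (ball y q ∩ A)} := by
    refine UpperSemicontinuous.isOpen_setOf_lt ?_ (lowerSemicontinuous_measure_ball_inter μ q A)
    exact ((ENNReal.continuous_const_mul hc).comp (ENNReal.continuous_mul_const
      ENNReal.ofReal_ne_top)).comp_upperSemicontinuous
      (upperSemicontinuous_measure_closedBall μ q)
      fun _ _ hab => mul_le_mul_right (mul_le_mul_left hab _) _
  refine ⟨_, fun y hy => ⟨q, ⟨hq0, hqr.trans hr.2⟩, ?_⟩, hV, ?_⟩
  · exact lt_of_le_of_lt (by gcongr; exact ball_subset_closedBall) hy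
  · show c * (μ (closedBall x q) * K) < μ (ball x q ∩ A)
    calc c * (μ (closedBall x q) * K)
        ≤ c * (μ (ball x r) * ENNReal.ofReal (r ^ h)) := by
          gcongr
          · exact closedBall_subset_ball hqr
          · exact ENNReal.ofReal_le_ofReal (Real.rpow_le_rpow hq0.le hqr.le hh)
      _ < μ (ball x s ∩ A) := hs
      _ ≤ μ (ball x q ∩ A) := measure_mono (inter_subset_inter_left _
          (ball_subset_ball ((le_max_left s 0).trans hsq.le)))

end MetricMeasure

theorem ENNReal.zero_lt_limsup_iff {α : Type*} {l : Filter α} {u : α → ℝ≥0∞} :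
    0 < limsup u l ↔ ∃ m : ℕ, ∃ᶠ x in l, ((m : ℝ≥0∞) + 1)⁻¹ < u x := by
  constructor
  · intro hu
    obtain ⟨m, hm⟩ := ENNReal.exists_inv_nat_lt hu.ne'
    refine ⟨m, frequently_lt_of_lt_limsup (by isBoundedDefault) (lt_of_le_of_lt ?_ hm)⟩
    exact ENNReal.inv_le_inv.2 le_self_add
  · rintro ⟨m, hm⟩
    exact (ENNReal.inv_pos.2 (by simp)).trans_le (le_limsup_of_frequently_le' (hm.mono
      fun _ => le_of_lt))

theorem frequently_nhdsGT_zero_iff {P : ℝ → Prop} :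
    (∃ᶠ r in 𝓝[>] 0, P r) ↔ ∀ k : ℕ, ∃ r ∈ Ioo 0 (1 / (k + 1 : ℝ)), P r := by
  rw [(nhdsGT_basis 0).frequently_iff]
  refine ⟨fun hP k => hP _ Nat.one_div_pos_of_nat, fun hP ε hε => ?_⟩
  obtain ⟨k, hk⟩ := exists_nat_one_div_lt hε
  obtain ⟨r, hr, hPr⟩ := hP k
  exact ⟨r, ⟨hr.1, hr.2.trans hk⟩, hPr⟩

section SuperdensityPoints

variable {n : ℕ}

theorem spt_eq_support (μ : Measure (EuclideanSpace ℝ (Fin n))) : spt μ = μ.support := by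
  ext x
  rw [Measure.mem_support_iff_forall, nhds_basis_ball.forall_iff fun _ _ hUV hU =>
    hU.trans_le (measure_mono hUV)]
  rfl

theorem isClosed_spt (μ : Measure (EuclideanSpace ℝ (Fin n))) : IsClosed (spt μ) :=
  spt_eq_support μ ▸ Measure.isClosed_support

variable {μ : Measure (EuclideanSpace ℝ (Fin n))}

theorem sdp_eq_spt_diff_baseOp (h : ℝ) (E : Set (EuclideanSpace ℝ (Fin n))) :
    sdp μ h E = spt μ \ baseOp μ h Eᶜ := by
  ext x
  simp only [sdp, baseOp, Set.mem_sdiff, mem_ofPred_eq, not_and, pos_iff_ne_zero, not_not]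
  refine and_congr_right fun hx => ⟨fun hlim _ => hlim.limsup_eq, fun hlim => ?_⟩
  exact tendsto_of_le_liminf_of_limsup_le zero_le (hlim hx).le

theorem baseOp_eq (h : ℝ) (A : Set (EuclideanSpace ℝ (Fin n))) :
    baseOp μ h A = spt μ ∩ ⋃ m : ℕ, ⋂ k : ℕ, {x | ∃ r ∈ Ioo 0 (1 / (k + 1 : ℝ)),
      ((m : ℝ≥0∞) + 1)⁻¹ * (μ (ball x r) * ENNReal.ofReal (r ^ h)) < μ (ball x r ∩ A)} := by
  ext x
  simp only [baseOp, mem_ofPred_eq, mem_inter_iff, mem_iUnion, mem_iInter,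
    ENNReal.zero_lt_limsup_iff, frequently_nhdsGT_zero_iff]
  refine and_congr_right fun _ => exists_congr fun m => forall_congr' fun k =>
    exists_congr fun r => and_congr_right fun _ => ?_
  exact ENNReal.lt_div_iff_mul_lt (Or.inr (by simp)) (Or.inr (by simp))

theorem measurableSet_baseOp [IsFiniteMeasureOnCompacts μ] {h : ℝ} (hh : 0 ≤ h)
    (A : Set (EuclideanSpace ℝ (Fin n))) : MeasurableSet (baseOp μ h A) := by
  rw [baseOp_eq]
  refine (isClosed_spt μ).measurableSet.inter (.iUnion fun m => .iInter fun k => ?_)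
  exact (isOpen_setOf_exists_mul_measure_ball_lt μ hh A (by simp) _).measurableSet

theorem measurableSet_sdp [IsFiniteMeasureOnCompacts μ] {h : ℝ} (hh : 0 ≤ h)
    (E : Set (EuclideanSpace ℝ (Fin n))) : MeasurableSet (sdp μ h E) := by
  rw [sdp_eq_spt_diff_baseOp]
  exact (isClosed_spt μ).measurableSet.diff (measurableSet_baseOp hh Eᶜ)

theorem sdp_subset_sdp {h h' : ℝ} (hle : h' ≤ h)
    (E : Set (EuclideanSpace ℝ (Fin n))) : sdp μ h E ⊆ sdp μ h' E := by
  rintro x ⟨hx, hlim⟩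
  refine ⟨hx, ENNReal.tendsto_nhds_zero.2 fun ε hε => ?_⟩
  filter_upwards [ENNReal.tendsto_nhds_zero.1 hlim ε hε,
    Ioo_mem_nhdsGT (zero_lt_one' ℝ)] with r hr hr01
  refine le_trans (ENNReal.div_le_div_left ?_ _) hr
  gcongr _ * ENNReal.ofReal ?_
  exact Real.rpow_le_rpow_of_exponent_ge hr01.1 hr01.2.le hle

section DensityDegree

variable {E : Set (EuclideanSpace ℝ (Fin n))} {x : EuclideanSpace ℝ (Fin n)}

theorem densityDegree_of_notMem (hx : x ∉ sdp μ 0 E) : densityDegree μ E x = -n := if_neg hx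

theorem zero_le_densityDegree (hx : x ∈ sdp μ 0 E) : 0 ≤ densityDegree μ E x := by
  rw [densityDegree, if_pos hx]
  exact le_sSup ⟨0, ⟨le_rfl, hx⟩, EReal.coe_zero⟩

theorem neg_natCast_le_densityDegree : -(n : EReal) ≤ densityDegree μ E x := by
  by_cases hx : x ∈ sdp μ 0 E
  · exact le_trans (by simp) (zero_le_densityDegree hx)
  · exact (densityDegree_of_notMem hx).ge

theorem mem_sdp_zero_of_le_densityDegree {a : EReal} (ha : -(n : EReal) < a)
    (hx : a ≤ densityDegree μ E x) : x ∈ sdp μ 0 E := by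
  by_contra hx0
  rw [densityDegree_of_notMem hx0] at hx
  exact hx.not_gt ha

theorem le_densityDegree_iff {a : ℝ} (ha : 0 < a) :
    (a : EReal) ≤ densityDegree μ E x ↔ ∀ q : ℚ, (q : ℝ) ∈ Ico 0 a → x ∈ sdp μ q E := by
  constructor
  · intro hax q hq
    have hx := mem_sdp_zero_of_le_densityDegree
      (lt_of_le_of_lt (by simp) (EReal.coe_pos.2 ha)) hax
    rw [densityDegree, if_pos hx] at hax
    obtain ⟨_, ⟨l, ⟨-, hxl⟩, rfl⟩, hql⟩ := lt_sSup_iff.1 ((EReal.coe_lt_coe hq.2).trans_le hax)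
    exact sdp_subset_sdp (EReal.coe_lt_coe_iff.1 hql).le E hxl
  · intro hx
    have hx0 : x ∈ sdp μ 0 E := by exact_mod_cast hx 0 (by simp [ha])
    refine le_of_forall_lt fun c hc => ?_
    rcases lt_or_ge c 0 with hc0 | hc0
    · exact hc0.trans_le (zero_le_densityDegree hx0)
    obtain ⟨p, hcp, hpa⟩ := EReal.exists_rat_btwn_of_lt hc
    have hp : (p : ℝ) ∈ Ico 0 a :=
      ⟨EReal.coe_nonneg.1 (hc0.trans hcp.le), EReal.coe_lt_coe_iff.1 hpa⟩
    rw [densityDegree, if_pos hx0]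
    exact hcp.trans_le (le_sSup ⟨p, ⟨hp.1, hx p hp⟩, rfl⟩)

theorem setOf_le_densityDegree_of_le_neg_natCast {a : EReal} (ha : a ≤ -n) :
    {x | a ≤ densityDegree μ E x} = univ :=
  eq_univ_of_forall fun _ => ha.trans neg_natCast_le_densityDegree

theorem setOf_le_densityDegree_of_nonpos {a : EReal} (ha : -(n : EReal) < a) (ha0 : a ≤ 0) :
    {x | a ≤ densityDegree μ E x} = sdp μ 0 E :=
  Subset.antisymm (fun _ hx => mem_sdp_zero_of_le_densityDegree ha hx)
    fun _ hx => ha0.trans (zero_le_densityDegree hx)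

theorem setOf_le_densityDegree_of_pos {a : ℝ} (ha : 0 < a) :
    {x | (a : EReal) ≤ densityDegree μ E x} = ⋂ (q : ℚ) (_ : (q : ℝ) ∈ Ico 0 a), sdp μ q E := by
  ext x
  simp only [mem_iInter]
  exact le_densityDegree_iff ha

end DensityDegree

end SuperdensityPoints

theorem stmt_17_general {n : ℕ} (μ : Measure (EuclideanSpace ℝ (Fin n)))
    [IsLocallyFiniteMeasure μ]
    (E : Set (EuclideanSpace ℝ (Fin n))) :
    ∀ a : ℝ, NullMeasurableSet {x | (a : EReal) ≤ densityDegree μ E x} μ := by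
  intro a
  refine MeasurableSet.nullMeasurableSet ?_
  rcases le_or_gt (a : EReal) (-n) with ha | ha
  · rw [setOf_le_densityDegree_of_le_neg_natCast ha]
    exact .univ
  rcases le_or_gt a 0 with ha0 | ha0
  · rw [setOf_le_densityDegree_of_nonpos ha (EReal.coe_nonpos.2 ha0)]
    exact measurableSet_sdp le_rfl E
  · rw [setOf_le_densityDegree_of_pos ha0]
    exact .iInter fun q => .iInter fun hq => measurableSet_sdp hq.1 E

theorem stmt_17 {n : ℕ} (μ : Measure (EuclideanSpace ℝ (Fin n)))
    [IsLocallyFiniteMeasure μ] [μ.Regular] (hspt : (spt μ).Nonempty)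
    (E : Set (EuclideanSpace ℝ (Fin n))) :
    ∀ a : ℝ, NullMeasurableSet {x | (a : EReal) ≤ densityDegree μ E x} μ :=
  stmt_17_general μ E
end
end

section
/- Let μ be a Radon outer measure on ℝ^n, Ω ⊂ ℝ^n open, f, G, H ∈ C¹(Ω), integers 1 ≤ p < q ≤ n, and x ∈ ℝ^n. Assume: (i) for i = p, q the distributional derivative D_i μ is a Borel real measure on ℝ^n; (ii) x ∈ Ω ∩ A^{μ,1}, where A := { y ∈ Ω : (D_p f(y), D_q f(y)) = (G(y), H(y)) }; (iii) lim_{ρ→1−} σ(ρ) = 1 where σ(ρ) := liminf_{r→0+} μ(B_r(x))/μ(B_{ρr}(x)); (iv) for i = p, q, lim_{r→0+} |D_i μ|(B_r(x))/(r μ(B_r(x))) = 0. Then D_p H(x) = D_q G(x). -/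
open MeasureTheory Metric Filter Set Topology

noncomputable section

/-!
Test against a bump `φ` that equals `1` on `B(x, ρr)`, is supported in `B(x, r)` and has
`|∇φ| ≲ 1/r`. Integrating by parts four times against `μ`, whose derivatives are `νp` and `νq`,
the mixed second derivatives of `φ` cancel and
`∫ φ (∂_p H - ∂_q G) dμ + ∫ (∂_p φ (H - ∂_q f) - ∂_q φ (G - ∂_p f)) dμ`
becomes a sum of integrals against `νp`, `νq` of size `(1 + 1/r) |ν|(B(x, r))`. The second
integrand vanishes on the coincidence set `A` and is `O(1/r)`, so by (ii) and (iv) everything is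
`o(μ(B(x, r)))`. By continuity the first integral is
`(∂_p H(x) - ∂_q G(x)) ∫ φ dμ + o(μ(B(x, r)))`, while `∫ φ dμ ≥ μ(B(x, ρr))` and (iii) yields
a `ρ < 1` with `μ(B(x, r)) ≤ 2 μ(B(x, ρr))` for arbitrarily small `r`.
-/

open scoped ENNReal

theorem abs_integral_le_of_forall_notMem_eq_zero {X : Type*} [MeasurableSpace X]
    {m : Measure X} {g : X → ℝ} {s : Set X} {C : ℝ} (hs : m s ≠ ∞)
    (hb : ∀ y ∈ s, |g y| ≤ C) (h0 : ∀ y ∉ s, g y = 0) : |∫ y, g y ∂m| ≤ C * m.real s := by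
  rw [← setIntegral_eq_integral_of_forall_compl_eq_zero h0]
  exact norm_setIntegral_le_of_norm_le_const (f := g) hs.lt_top hb

theorem integrable_mul_of_tsupport_subset {X : Type*} [TopologicalSpace X] [MeasurableSpace X]
    [OpensMeasurableSpace X] {μ : Measure X} [IsFiniteMeasureOnCompacts μ] {Ω : Set X}
    {c g : X → ℝ} (hc : Continuous c) (hcs : HasCompactSupport c) (hg : ContinuousOn g Ω)
    (hΩ : IsOpen Ω) (hcΩ : tsupport c ⊆ Ω) : Integrable (fun y ↦ c y * g y) μ :=
  ((hc.continuousOn.mul hg).continuous_of_tsupport_subset hΩ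
    (tsupport_mul_subset_left.trans hcΩ)).integrable_of_hasCompactSupport hcs.mul_right

theorem measureReal_le_integral_of_eqOn_one {X : Type*} [TopologicalSpace X] [MeasurableSpace X]
    [OpensMeasurableSpace X] {μ : Measure X} {φ : X → ℝ} {s : Set X}
    (hφ : Integrable φ μ) (hφ0 : ∀ y, 0 ≤ φ y) (hs : MeasurableSet s) (hφ1 : EqOn φ 1 s) :
    μ.real s ≤ ∫ y, φ y ∂μ := by
  calc μ.real s = ∫ y in s, φ y ∂μ := by simp [setIntegral_congr_fun hs hφ1]
    _ ≤ ∫ y, φ y ∂μ := setIntegral_le_integral hφ (Eventually.of_forall hφ0)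

namespace MeasureTheory.SignedMeasure

variable {X : Type*} [MeasurableSpace X]

def jordanIntegral (ν : SignedMeasure X) (g : X → ℝ) : ℝ :=
  ∫ y, g y ∂ν.toJordanDecomposition.posPart - ∫ y, g y ∂ν.toJordanDecomposition.negPart

theorem abs_jordanIntegral_le (ν : SignedMeasure X) {g : X → ℝ} {s : Set X} {C : ℝ}
    (hb : ∀ y ∈ s, |g y| ≤ C) (h0 : ∀ y ∉ s, g y = 0) :
    |ν.jordanIntegral g| ≤ C * ν.totalVariation.real s := by
  rw [totalVariation, measureReal_add_apply, mul_add]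
  exact (abs_sub _ _).trans (add_le_add
    (abs_integral_le_of_forall_notMem_eq_zero (measure_ne_top _ _) hb h0)
    (abs_integral_le_of_forall_notMem_eq_zero (measure_ne_top _ _) hb h0))

end MeasureTheory.SignedMeasure

section Calculus

variable {E : Type*} [NormedAddCommGroup E] [NormedSpace ℝ E] {Ω : Set E}

theorem ContDiffOn.contDiff_of_tsupport_subset {F : Type*} [NormedAddCommGroup F]
    [NormedSpace ℝ F] {n : WithTop ℕ∞} {g : E → F} (hg : ContDiffOn ℝ n g Ω) (hΩ : IsOpen Ω)
    (hgΩ : tsupport g ⊆ Ω) : ContDiff ℝ n g :=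
  contDiff_of_contDiffOn_union_of_isOpen hg
    (contDiffOn_const.congr fun _ hy ↦ image_eq_zero_of_notMem_tsupport hy)
    (eq_univ_of_forall fun y ↦ (em (y ∈ Ω)).imp id fun hy h ↦ hy (hgΩ h)) hΩ
    (isClosed_tsupport g).isOpen_compl

theorem ContDiffOn.continuousOn_fderiv_apply {g : E → ℝ} (hg : ContDiffOn ℝ 1 g Ω)
    (hΩ : IsOpen Ω) (w : E) : ContinuousOn (fun y ↦ fderiv ℝ g y w) Ω :=
  (hg.continuousOn_fderiv_of_isOpen hΩ le_rfl).clm_apply continuousOn_const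

theorem fderiv_mul_apply_of_tsupport_subset {c g : E → ℝ} (hc : Differentiable ℝ c)
    (hg : DifferentiableOn ℝ g Ω) (hΩ : IsOpen Ω) (hcΩ : tsupport c ⊆ Ω) (y v : E) :
    fderiv ℝ (fun z ↦ c z * g z) y v = fderiv ℝ c y v * g y + c y * fderiv ℝ g y v := by
  by_cases hy : y ∈ tsupport c
  · rw [fderiv_fun_mul (hc y) (hg.differentiableAt (hΩ.mem_nhds (hcΩ hy)))]
    simp only [add_apply, smul_apply, smul_eq_mul]
    ring
  · have hy' : y ∉ tsupport fun z ↦ c z * g z := fun h ↦ hy (tsupport_mul_subset_left h)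
    simp [fderiv_of_notMem_tsupport _ hy', fderiv_of_notMem_tsupport _ hy,
      image_eq_zero_of_notMem_tsupport hy]

theorem ContDiff.fderiv_fderiv_apply_comm {φ : E → ℝ} (hφ : ContDiff ℝ 2 φ) (y u v : E) :
    fderiv ℝ (fun z ↦ fderiv ℝ φ z v) y u = fderiv ℝ (fun z ↦ fderiv ℝ φ z u) y v := by
  have hd : DifferentiableAt ℝ (fderiv ℝ φ) y :=
    (hφ.fderiv_right (m := 1) (by norm_num)).differentiable one_ne_zero y
  rw [fderiv_clm_apply hd (differentiableAt_const _),
    fderiv_clm_apply hd (differentiableAt_const _)]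
  simpa using (hφ.contDiffAt.isSymmSndFDerivAt (by simp)) u v

end Calculus

section Bump

variable {E : Type*} [NormedAddCommGroup E] [NormedSpace ℝ E] [FiniteDimensional ℝ E]

theorem exists_rescaled_bump {ρ : ℝ} (hρ0 : 0 < ρ) (hρ1 : ρ < 1) :
    ∃ M, 0 ≤ M ∧ ∀ (x : E) (r : ℝ), 0 < r → ∃ φ : E → ℝ, ContDiff ℝ 2 φ ∧ HasCompactSupport φ ∧
      tsupport φ ⊆ ball x r ∧ (∀ y, φ y ∈ Icc 0 1) ∧ EqOn φ 1 (closedBall x (ρ * r)) ∧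
      ∀ y, ‖fderiv ℝ φ y‖ ≤ M / r := by
  let Φ : ContDiffBump (0 : E) := ⟨ρ, (1 + ρ) / 2, hρ0, by linarith⟩
  obtain ⟨M, hM⟩ := ((Φ.contDiff (n := 2)).continuous_fderiv
    (by norm_num)).bounded_above_of_compact_support (Φ.hasCompactSupport.fderiv ℝ)
  refine ⟨M, (norm_nonneg _).trans (hM 0), fun x r hr ↦ ?_⟩
  have hnorm (y : E) : ‖r⁻¹ • (y - x)‖ = dist y x / r := by
    rw [norm_smul, Real.norm_of_nonneg (inv_nonneg.2 hr.le), dist_eq_norm, inv_mul_eq_div]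
  have hsupp :
      Function.support (fun y ↦ Φ (r⁻¹ • (y - x))) ⊆ closedBall x ((1 + ρ) / 2 * r) := by
    intro y hy
    have := Φ.support_eq.subset hy
    rw [mem_ball_zero_iff, hnorm, div_lt_iff₀ hr] at this
    exact mem_closedBall.2 this.le
  refine ⟨fun y ↦ Φ (r⁻¹ • (y - x)), Φ.contDiff.comp (by fun_prop),
    HasCompactSupport.of_support_subset_isCompact (isCompact_closedBall _ _) hsupp, ?_, ?_, ?_, ?_⟩
  · refine (closure_minimal hsupp isClosed_closedBall).trans (closedBall_subset_ball ?_)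
    nlinarith
  · exact fun y ↦ ⟨Φ.nonneg, Φ.le_one⟩
  · intro y hy
    apply Φ.one_of_mem_closedBall
    rw [mem_closedBall_zero_iff, hnorm, div_le_iff₀ hr]
    exact mem_closedBall.1 hy
  · intro y
    have hL : HasFDerivAt (fun y : E ↦ r⁻¹ • (y - x)) (r⁻¹ • ContinuousLinearMap.id ℝ E) y :=
      ((hasFDerivAt_id y).sub_const x).const_smul r⁻¹
    have hφ : HasFDerivAt (fun y ↦ Φ (r⁻¹ • (y - x)))
        ((fderiv ℝ Φ (r⁻¹ • (y - x))).comp (r⁻¹ • ContinuousLinearMap.id ℝ E)) y :=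
      ((Φ.contDiff (n := 1)).differentiable one_ne_zero _).hasFDerivAt.comp y hL
    rw [hφ.fderiv, div_eq_mul_inv]
    refine (ContinuousLinearMap.opNorm_comp_le _ _).trans (mul_le_mul (hM _) ?_ (norm_nonneg _)
      ((norm_nonneg _).trans (hM 0)))
    rw [norm_smul, Real.norm_of_nonneg (inv_nonneg.2 hr.le)]
    exact mul_le_of_le_one_right (inv_nonneg.2 hr.le) ContinuousLinearMap.norm_id_le

end Bump

section DistribDeriv

variable {E : Type*} [NormedAddCommGroup E] [NormedSpace ℝ E] [MeasurableSpace E]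

def IsDistribDeriv (μ : Measure E) (v : E) (ν : SignedMeasure E) : Prop :=
  ∀ φ : E → ℝ, ContDiff ℝ 1 φ → HasCompactSupport φ →
    ∫ y, fderiv ℝ φ y v ∂μ = -ν.jordanIntegral φ

variable {μ : Measure E} {Ω : Set E} {u v : E} {ν νu νv : SignedMeasure E}
  {c g f G H φ : E → ℝ} {s A : Set E} {C L : ℝ}

theorem abs_integral_fderiv_mul_sub_le (hφsub : tsupport φ ⊆ s) (hs : μ s ≠ ∞)
    (hDφ : ∀ y, |fderiv ℝ φ y u| ≤ L ∧ |fderiv ℝ φ y v| ≤ L)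
    (hC : ∀ y ∈ s, |H y - fderiv ℝ f y v| ≤ C ∧ |G y - fderiv ℝ f y u| ≤ C)
    (hA : ∀ y ∈ A, fderiv ℝ f y u = G y ∧ fderiv ℝ f y v = H y) :
    |∫ y, (fderiv ℝ φ y u * (H y - fderiv ℝ f y v) - fderiv ℝ φ y v * (G y - fderiv ℝ f y u)) ∂μ|
      ≤ 2 * L * C * μ.real (s \ A) := by
  have hL : 0 ≤ L := (abs_nonneg _).trans (hDφ 0).1
  refine abs_integral_le_of_forall_notMem_eq_zero
    ((measure_mono sdiff_subset).trans_lt hs.lt_top).ne (fun y hy ↦ ?_) (fun y hy ↦ ?_)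
  · refine (abs_sub _ _).trans ?_
    rw [abs_mul, abs_mul]
    linarith [mul_le_mul (hDφ y).1 (hC y hy.1).1 (abs_nonneg _) hL,
      mul_le_mul (hDφ y).2 (hC y hy.1).2 (abs_nonneg _) hL]
  · by_cases hys : y ∈ s
    · obtain ⟨hu, hv⟩ := hA y (not_not.1 fun h ↦ hy ⟨hys, h⟩)
      simp [hu, hv]
    · simp [fderiv_of_notMem_tsupport ℝ fun h ↦ hys (hφsub h)]

variable [BorelSpace E] [IsFiniteMeasureOnCompacts μ]

theorem IsDistribDeriv.integrable_and_integral_fderiv_mul (hν : IsDistribDeriv μ v ν)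
    (hc : ContDiff ℝ 1 c) (hcs : HasCompactSupport c) (hg : ContDiffOn ℝ 1 g Ω) (hΩ : IsOpen Ω)
    (hcΩ : tsupport c ⊆ Ω) :
    Integrable (fun y ↦ fderiv ℝ c y v * g y + c y * fderiv ℝ g y v) μ ∧
      ∫ y, (fderiv ℝ c y v * g y + c y * fderiv ℝ g y v) ∂μ =
        -ν.jordanIntegral fun y ↦ c y * g y := by
  have hcg : ContDiff ℝ 1 fun y ↦ c y * g y :=
    (hc.contDiffOn.mul hg).contDiff_of_tsupport_subset hΩ (tsupport_mul_subset_left.trans hcΩ)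
  have hderiv := fderiv_mul_apply_of_tsupport_subset (hc.differentiable one_ne_zero)
    (hg.differentiableOn one_ne_zero) hΩ hcΩ (v := v)
  simp_rw [← hderiv]
  exact ⟨((hcg.continuous_fderiv one_ne_zero).clm_apply
    continuous_const).integrable_of_hasCompactSupport (hcs.mul_right.fderiv_apply ℝ v),
    hν _ hcg hcs.mul_right⟩

theorem IsDistribDeriv.integral_curl_eq (hνu : IsDistribDeriv μ u νu)
    (hνv : IsDistribDeriv μ v νv) (hf : ContDiffOn ℝ 1 f Ω) (hG : ContDiffOn ℝ 1 G Ω)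
    (hH : ContDiffOn ℝ 1 H Ω) (hφ : ContDiff ℝ 2 φ) (hφs : HasCompactSupport φ) (hΩ : IsOpen Ω)
    (hφΩ : tsupport φ ⊆ Ω) :
    ∫ y, (φ y * (fderiv ℝ H y u - fderiv ℝ G y v) + fderiv ℝ φ y u * (H y - fderiv ℝ f y v)
        - fderiv ℝ φ y v * (G y - fderiv ℝ f y u)) ∂μ =
      -νu.jordanIntegral (fun y ↦ φ y * H y) + νv.jordanIntegral (fun y ↦ φ y * G y)
        - νu.jordanIntegral (fun y ↦ fderiv ℝ φ y v * f y)
        + νv.jordanIntegral (fun y ↦ fderiv ℝ φ y u * f y) := by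
  have hDφ (w : E) : ContDiff ℝ 1 fun y ↦ fderiv ℝ φ y w :=
    (hφ.fderiv_right (m := 1) (by norm_num)).clm_apply contDiff_const
  have hφ1 : ContDiff ℝ 1 φ := hφ.of_le (by norm_num)
  obtain ⟨i₁, e₁⟩ := hνu.integrable_and_integral_fderiv_mul hφ1 hφs hH hΩ hφΩ
  obtain ⟨i₂, e₂⟩ := hνv.integrable_and_integral_fderiv_mul hφ1 hφs hG hΩ hφΩ
  obtain ⟨i₃, e₃⟩ := hνu.integrable_and_integral_fderiv_mul (hDφ v) (hφs.fderiv_apply ℝ v) hf hΩ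
    ((tsupport_fderiv_apply_subset ℝ v).trans hφΩ)
  obtain ⟨i₄, e₄⟩ := hνv.integrable_and_integral_fderiv_mul (hDφ u) (hφs.fderiv_apply ℝ u) hf hΩ
    ((tsupport_fderiv_apply_subset ℝ u).trans hφΩ)
  calc _ = ∫ y, ((fderiv ℝ φ y u * H y + φ y * fderiv ℝ H y u)
          - (fderiv ℝ φ y v * G y + φ y * fderiv ℝ G y v)
          + (fderiv ℝ (fun z ↦ fderiv ℝ φ z v) y u * f y + fderiv ℝ φ y v * fderiv ℝ f y u)
          - (fderiv ℝ (fun z ↦ fderiv ℝ φ z u) y v * f y + fderiv ℝ φ y u * fderiv ℝ f y v))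
          ∂μ := by
        congr 1 with y
        rw [hφ.fderiv_fderiv_apply_comm y u v]
        ring
    _ = _ := by
        rw [integral_sub (by exact (i₁.sub i₂).add i₃) i₄, integral_add (by exact i₁.sub i₂) i₃,
          integral_sub i₁ i₂, e₁, e₂, e₃, e₄]
        ring

theorem IsDistribDeriv.abs_integral_curl_le (hνu : IsDistribDeriv μ u νu)
    (hνv : IsDistribDeriv μ v νv) (hf : ContDiffOn ℝ 1 f Ω) (hG : ContDiffOn ℝ 1 G Ω)
    (hH : ContDiffOn ℝ 1 H Ω) (hΩ : IsOpen Ω) (hφ : ContDiff ℝ 2 φ) (hφs : HasCompactSupport φ)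
    (hφsub : tsupport φ ⊆ s) (hsΩ : s ⊆ Ω) (hφ1 : ∀ y, |φ y| ≤ 1)
    (hDφ : ∀ y, |fderiv ℝ φ y u| ≤ L ∧ |fderiv ℝ φ y v| ≤ L)
    (hC : ∀ y ∈ s, |f y| ≤ C ∧ |G y| ≤ C ∧ |H y| ≤ C) :
    |∫ y, (φ y * (fderiv ℝ H y u - fderiv ℝ G y v) + fderiv ℝ φ y u * (H y - fderiv ℝ f y v)
        - fderiv ℝ φ y v * (G y - fderiv ℝ f y u)) ∂μ|
      ≤ C * (1 + L) * (νu.totalVariation.real s + νv.totalVariation.real s) := by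
  have hφ0 (y) (hy : y ∉ s) : φ y = 0 := image_eq_zero_of_notMem_tsupport fun h ↦ hy (hφsub h)
  have hDφ0 (y) (hy : y ∉ s) : fderiv ℝ φ y = 0 :=
    fderiv_of_notMem_tsupport ℝ fun h ↦ hy (hφsub h)
  have hL : 0 ≤ L := (abs_nonneg _).trans (hDφ 0).1
  rw [hνu.integral_curl_eq hνv hf hG hH hφ hφs hΩ (hφsub.trans hsΩ)]
  have j₁ := νu.abs_jordanIntegral_le (g := fun y ↦ φ y * H y) (s := s) (C := C)
    (fun y hy ↦ by
      rw [abs_mul]; exact (mul_le_of_le_one_left (abs_nonneg _) (hφ1 y)).trans (hC y hy).2.2)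
    (fun y hy ↦ by simp [hφ0 y hy])
  have j₂ := νv.abs_jordanIntegral_le (g := fun y ↦ φ y * G y) (s := s) (C := C)
    (fun y hy ↦ by
      rw [abs_mul]; exact (mul_le_of_le_one_left (abs_nonneg _) (hφ1 y)).trans (hC y hy).2.1)
    (fun y hy ↦ by simp [hφ0 y hy])
  have j₃ := νu.abs_jordanIntegral_le (g := fun y ↦ fderiv ℝ φ y v * f y) (s := s) (C := L * C)
    (fun y hy ↦ by rw [abs_mul]; exact mul_le_mul (hDφ y).2 (hC y hy).1 (abs_nonneg _) hL)
    (fun y hy ↦ by simp [hDφ0 y hy])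
  have j₄ := νv.abs_jordanIntegral_le (g := fun y ↦ fderiv ℝ φ y u * f y) (s := s) (C := L * C)
    (fun y hy ↦ by rw [abs_mul]; exact mul_le_mul (hDφ y).1 (hC y hy).1 (abs_nonneg _) hL)
    (fun y hy ↦ by simp [hDφ0 y hy])
  rw [abs_le] at j₁ j₂ j₃ j₄ ⊢
  constructor <;> linarith

theorem IsDistribDeriv.abs_sub_mul_integral_le (hνu : IsDistribDeriv μ u νu)
    (hνv : IsDistribDeriv μ v νv) (hf : ContDiffOn ℝ 1 f Ω) (hG : ContDiffOn ℝ 1 G Ω)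
    (hH : ContDiffOn ℝ 1 H Ω) (hΩ : IsOpen Ω) (hφ : ContDiff ℝ 2 φ) (hφs : HasCompactSupport φ)
    (hφsub : tsupport φ ⊆ s) (hsΩ : s ⊆ Ω) (hs : μ s ≠ ∞) (hφ1 : ∀ y, |φ y| ≤ 1)
    (hDφ : ∀ y, |fderiv ℝ φ y u| ≤ L ∧ |fderiv ℝ φ y v| ≤ L)
    (hC : ∀ y ∈ s, |f y| ≤ C ∧ |G y| ≤ C ∧ |H y| ≤ C ∧
      |H y - fderiv ℝ f y v| ≤ C ∧ |G y - fderiv ℝ f y u| ≤ C)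
    (hA : ∀ y ∈ A, fderiv ℝ f y u = G y ∧ fderiv ℝ f y v = H y) {a b ε : ℝ}
    (hosc : ∀ y ∈ s, |fderiv ℝ H y u - fderiv ℝ G y v - (a - b)| ≤ ε) :
    |(a - b) * ∫ y, φ y ∂μ| ≤ C * (1 + L) * (νu.totalVariation.real s + νv.totalVariation.real s)
      + 2 * L * C * μ.real (s \ A) + ε * μ.real s := by
  have hDc (w : E) : Continuous fun y ↦ fderiv ℝ φ y w :=
    (hφ.continuous_fderiv (by norm_num)).clm_apply continuous_const
  have hDsupp (w : E) : tsupport (fun y ↦ fderiv ℝ φ y w) ⊆ Ω :=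
    (tsupport_fderiv_apply_subset ℝ w).trans (hφsub.trans hsΩ)
  have iφ : Integrable (fun y ↦ (a - b) * φ y) μ :=
    (hφ.continuous.integrable_of_hasCompactSupport hφs).const_mul _
  have iR : Integrable (fun y ↦ fderiv ℝ φ y u * (H y - fderiv ℝ f y v)
      - fderiv ℝ φ y v * (G y - fderiv ℝ f y u)) μ :=
    (integrable_mul_of_tsupport_subset (hDc u) (hφs.fderiv_apply ℝ u)
      (hH.continuousOn.sub (hf.continuousOn_fderiv_apply hΩ v)) hΩ (hDsupp u)).sub'
    (integrable_mul_of_tsupport_subset (hDc v) (hφs.fderiv_apply ℝ v)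
      (hG.continuousOn.sub (hf.continuousOn_fderiv_apply hΩ u)) hΩ (hDsupp v))
  have iD : Integrable (fun y ↦ φ y * (fderiv ℝ H y u - fderiv ℝ G y v - (a - b))) μ :=
    integrable_mul_of_tsupport_subset hφ.continuous hφs
      (((hH.continuousOn_fderiv_apply hΩ u).sub (hG.continuousOn_fderiv_apply hΩ v)).sub
        continuousOn_const) hΩ (hφsub.trans hsΩ)
  have hW := hνu.abs_integral_curl_le hνv hf hG hH hΩ hφ hφs hφsub hsΩ hφ1 hDφ
    fun y hy ↦ ⟨(hC y hy).1, (hC y hy).2.1, (hC y hy).2.2.1⟩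
  rw [show ∫ y, (φ y * (fderiv ℝ H y u - fderiv ℝ G y v) + fderiv ℝ φ y u * (H y - fderiv ℝ f y v)
      - fderiv ℝ φ y v * (G y - fderiv ℝ f y u)) ∂μ = (a - b) * ∫ y, φ y ∂μ
      + ∫ y, (fderiv ℝ φ y u * (H y - fderiv ℝ f y v) - fderiv ℝ φ y v * (G y - fderiv ℝ f y u)) ∂μ
      + ∫ y, φ y * (fderiv ℝ H y u - fderiv ℝ G y v - (a - b)) ∂μ by
    rw [← integral_const_mul, ← integral_add iφ iR, ← integral_add (by exact iφ.add iR) iD]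
    congr 1 with y
    ring] at hW
  have hR := abs_integral_fderiv_mul_sub_le (μ := μ) hφsub hs hDφ
    (fun y hy ↦ (hC y hy).2.2.2) hA
  have hosc' : |∫ y, φ y * (fderiv ℝ H y u - fderiv ℝ G y v - (a - b)) ∂μ| ≤ ε * μ.real s := by
    refine abs_integral_le_of_forall_notMem_eq_zero hs (fun y hy ↦ ?_)
      (fun y hy ↦ by simp [image_eq_zero_of_notMem_tsupport fun h ↦ hy (hφsub h)])
    rw [abs_mul]
    exact (mul_le_of_le_one_left (abs_nonneg _) (hφ1 y)).trans (hosc y hy)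
  rw [abs_le] at hW hR hosc' ⊢
  constructor <;> linarith

theorem IsDistribDeriv.abs_sub_le_of_bump (hνu : IsDistribDeriv μ u νu)
    (hνv : IsDistribDeriv μ v νv) (hf : ContDiffOn ℝ 1 f Ω) (hG : ContDiffOn ℝ 1 G Ω)
    (hH : ContDiffOn ℝ 1 H Ω) (hΩ : IsOpen Ω) (hu : ‖u‖ ≤ 1) (hv : ‖v‖ ≤ 1)
    (hA : ∀ y ∈ A, fderiv ℝ f y u = G y ∧ fderiv ℝ f y v = H y) {x : E} {r ρ M a b η : ℝ}
    (hr : 0 < r) (hr1 : r ≤ 1) (hφ : ContDiff ℝ 2 φ) (hφs : HasCompactSupport φ)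
    (hφsub : tsupport φ ⊆ ball x r) (hφ01 : ∀ y, φ y ∈ Icc 0 1)
    (hφ1 : EqOn φ 1 (closedBall x (ρ * r))) (hM : 0 ≤ M)
    (hDφ : ∀ y, ‖fderiv ℝ φ y‖ ≤ M / r)
    (hball : ∀ y ∈ ball x r, y ∈ Ω ∧ (|f y| ≤ C ∧ |G y| ≤ C ∧ |H y| ≤ C ∧
      |H y - fderiv ℝ f y v| ≤ C ∧ |G y - fderiv ℝ f y u| ≤ C) ∧
      |fderiv ℝ H y u - fderiv ℝ G y v - (a - b)| ≤ η)
    (htvu : νu.totalVariation.real (ball x r) ≤ η * r * μ.real (ball x r))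
    (htvv : νv.totalVariation.real (ball x r) ≤ η * r * μ.real (ball x r))
    (hdiff : μ.real (ball x r \ A) ≤ η * r * μ.real (ball x r))
    (hdouble : μ.real (ball x r) ≤ 2 * μ.real (ball x (ρ * r)))
    (hpos : 0 < μ.real (ball x r)) :
    |a - b| ≤ 2 * (4 * C * (1 + M) + 1) * η := by
  have hx := hball x (mem_ball_self hr)
  have hC : 0 ≤ C := (abs_nonneg _).trans hx.2.1.1
  have hη : 0 ≤ η := (abs_nonneg _).trans hx.2.2
  have hDφ' (y : E) : |fderiv ℝ φ y u| ≤ M / r ∧ |fderiv ℝ φ y v| ≤ M / r := by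
    have hMr : 0 ≤ M / r := div_nonneg hM hr.le
    exact ⟨((fderiv ℝ φ y).le_of_opNorm_le (hDφ y) u).trans (mul_le_of_le_one_right hMr hu),
      ((fderiv ℝ φ y).le_of_opNorm_le (hDφ y) v).trans (mul_le_of_le_one_right hMr hv)⟩
  have hest := hνu.abs_sub_mul_integral_le hνv hf hG hH hΩ hφ hφs hφsub
    (fun y hy ↦ (hball y hy).1) (ENNReal.toReal_pos_iff.1 hpos).2.ne
    (fun y ↦ abs_le.2 ⟨by linarith [(hφ01 y).1], (hφ01 y).2⟩) hDφ'
    (fun y hy ↦ (hball y hy).2.1) hA (fun y hy ↦ (hball y hy).2.2)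
  have hlow : μ.real (ball x (ρ * r)) ≤ ∫ y, φ y ∂μ :=
    measureReal_le_integral_of_eqOn_one (hφ.continuous.integrable_of_hasCompactSupport hφs)
      (fun y ↦ (hφ01 y).1) measurableSet_ball (hφ1.mono ball_subset_closedBall)
  set m := μ.real (ball x r)
  refine le_of_mul_le_mul_right ?_ hpos
  calc |a - b| * m ≤ |a - b| * (2 * ∫ y, φ y ∂μ) :=
        mul_le_mul_of_nonneg_left (by linarith) (abs_nonneg _)
    _ = 2 * |(a - b) * ∫ y, φ y ∂μ| := by
        rw [abs_mul, abs_of_nonneg (integral_nonneg fun y ↦ (hφ01 y).1)]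
        ring
    _ ≤ 2 * (C * (1 + M / r) * (η * r * m + η * r * m) + 2 * (M / r) * C * (η * r * m)
          + η * m) := by
        gcongr
        refine hest.trans ?_
        gcongr
    _ = 2 * (2 * C * (r + M) + 2 * M * C + 1) * η * m := by
        field_simp
        ring
    _ ≤ 2 * (4 * C * (1 + M) + 1) * η * m := by
        gcongr
        nlinarith

end DistribDeriv

section Density

theorem eventually_toReal_le_mul_of_tendsto_div {α : Type*} {l : Filter α} {a c : α → ℝ≥0∞}
    (h : Tendsto (fun r ↦ a r / c r) l (𝓝 0)) (hc : ∀ᶠ r in l, c r ≠ ∞) {ε : ℝ} (hε : 0 < ε) :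
    ∀ᶠ r in l, (a r).toReal ≤ ε * (c r).toReal := by
  have hε' : (0 : ℝ≥0∞) < ENNReal.ofReal ε := ENNReal.ofReal_pos.2 hε
  filter_upwards [h.eventually_lt_const hε', hc] with r hr hcr
  have := ENNReal.toReal_mono (ENNReal.mul_ne_top ENNReal.ofReal_ne_top hcr)
    ((ENNReal.div_le_iff_le_mul (Or.inr ENNReal.ofReal_ne_top) (Or.inr hε'.ne')).1 hr.le)
  rwa [ENNReal.toReal_mul, ENNReal.toReal_ofReal hε.le] at this

theorem ContinuousAt.eventually_atTop_eventually_abs_le {X : Type*} [TopologicalSpace X]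
    {g : X → ℝ} {x : X} (hg : ContinuousAt g x) : ∀ᶠ C in atTop, ∀ᶠ y in 𝓝 x, |g y| ≤ C :=
  eventually_atTop.2 ⟨|g x| + 1, fun _ hC ↦
    (hg.abs.eventually_lt continuousAt_const (lt_add_one _)).mono fun _ hy ↦ hy.le.trans hC⟩

theorem Filter.Eventually.eventually_forall_mem_ball {X : Type*} [PseudoMetricSpace X] {x : X}
    {P : X → Prop} (h : ∀ᶠ y in 𝓝 x, P y) : ∀ᶠ r in 𝓝[>] (0 : ℝ), ∀ y ∈ ball x r, P y := by
  obtain ⟨δ, hδ, hP⟩ := Metric.eventually_nhds_iff_ball.1 h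
  filter_upwards [Ioo_mem_nhdsGT hδ] with r hr y hy using hP y (ball_subset_ball hr.2.le hy)

variable {X : Type*} [PseudoMetricSpace X] [MeasurableSpace X] {μ : Measure X} {x : X}
  [ProperSpace X] [IsFiniteMeasureOnCompacts μ]

theorem eventually_toReal_le_mul_measure_ball {a : ℝ → ℝ≥0∞}
    (h : Tendsto (fun r ↦ a r / (ENNReal.ofReal r * μ (ball x r))) (𝓝[>] 0) (𝓝 0))
    {ε : ℝ} (hε : 0 < ε) : ∀ᶠ r in 𝓝[>] 0, (a r).toReal ≤ ε * r * μ.real (ball x r) := by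
  filter_upwards [eventually_toReal_le_mul_of_tendsto_div h (Eventually.of_forall fun r ↦
    ENNReal.mul_ne_top ENNReal.ofReal_ne_top measure_ball_lt_top.ne) hε, self_mem_nhdsWithin]
    with r hr (hr0 : 0 < r)
  rwa [ENNReal.toReal_mul, ENNReal.toReal_ofReal hr0.le, ← mul_assoc] at hr

theorem exists_frequently_measure_ball_le_two_mul
    (hσ : Tendsto (fun ρ : ℝ ↦ liminf (fun r ↦ μ (ball x r) / μ (ball x (ρ * r))) (𝓝[>] 0))
      (𝓝[<] 1) (𝓝 1)) :
    ∃ ρ, 0 < ρ ∧ ρ < 1 ∧ ∃ᶠ r in 𝓝[>] 0, μ.real (ball x r) ≤ 2 * μ.real (ball x (ρ * r)) := by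
  obtain ⟨ρ, hlt, hρ0, hρ1⟩ := ((hσ.eventually_lt_const (by norm_num : (1 : ℝ≥0∞) < 2)).and
    ((eventually_nhdsWithin_of_eventually_nhds (eventually_gt_nhds one_pos)).and
      self_mem_nhdsWithin)).exists
  refine ⟨ρ, hρ0, hρ1, (frequently_lt_of_liminf_lt (by isBoundedDefault) hlt).mono fun r hr ↦ ?_⟩
  have := ENNReal.toReal_mono (ENNReal.mul_ne_top ENNReal.ofNat_ne_top measure_ball_lt_top.ne)
    ((ENNReal.div_le_iff_le_mul (Or.inr ENNReal.ofNat_ne_top) (Or.inr two_ne_zero)).1 hr.le)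
  rwa [ENNReal.toReal_mul, ENNReal.toReal_ofNat] at this

end Density

theorem eventually_measureReal_ball_diff_le_of_mem_sdp {n : ℕ}
    {μ : Measure (EuclideanSpace ℝ (Fin n))} [IsLocallyFiniteMeasure μ]
    {A : Set (EuclideanSpace ℝ (Fin n))} {x : EuclideanSpace ℝ (Fin n)} (hx : x ∈ sdp μ 1 A)
    {ε : ℝ} (hε : 0 < ε) : ∀ᶠ r in 𝓝[>] 0, μ.real (ball x r \ A) ≤ ε * r * μ.real (ball x r) :=
  eventually_toReal_le_mul_measure_ball (by simpa only [Real.rpow_one, mul_comm] using hx.2) hε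

theorem stmt_19_general {n : ℕ} (μ : Measure (EuclideanSpace ℝ (Fin n)))
    [IsLocallyFiniteMeasure μ]
    (Ω : Set (EuclideanSpace ℝ (Fin n))) (hΩ : IsOpen Ω)
    (f G H : EuclideanSpace ℝ (Fin n) → ℝ)
    (hf : ContDiffOn ℝ 1 f Ω) (hG : ContDiffOn ℝ 1 G Ω) (hH : ContDiffOn ℝ 1 H Ω)
    (p q : Fin n)
    (x : EuclideanSpace ℝ (Fin n))
    (νp νq : SignedMeasure (EuclideanSpace ℝ (Fin n)))
    -- (i): `νp` is the `p`-th distributional derivative of `μ` (a Borel real measure)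
    (hνp : ∀ φ : EuclideanSpace ℝ (Fin n) → ℝ, ContDiff ℝ 1 φ → HasCompactSupport φ →
      ∫ y, fderiv ℝ φ y (EuclideanSpace.single p 1) ∂μ =
        -((∫ y, φ y ∂νp.toJordanDecomposition.posPart) -
          (∫ y, φ y ∂νp.toJordanDecomposition.negPart)))
    -- (i): `νq` is the `q`-th distributional derivative of `μ`
    (hνq : ∀ φ : EuclideanSpace ℝ (Fin n) → ℝ, ContDiff ℝ 1 φ → HasCompactSupport φ →
      ∫ y, fderiv ℝ φ y (EuclideanSpace.single q 1) ∂μ =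
        -((∫ y, φ y ∂νq.toJordanDecomposition.posPart) -
          (∫ y, φ y ∂νq.toJordanDecomposition.negPart)))
    -- (ii): `x` is a 1-superdensity point of the coincidence set `A`
    (hx : x ∈ Ω ∩ sdp μ 1 {y | y ∈ Ω ∧
      fderiv ℝ f y (EuclideanSpace.single p 1) = G y ∧
      fderiv ℝ f y (EuclideanSpace.single q 1) = H y})
    -- (iii)
    (hσ : Filter.Tendsto
      (fun ρ : ℝ => Filter.liminf
        (fun r : ℝ => μ (Metric.ball x r) / μ (Metric.ball x (ρ * r)))
        (nhdsWithin 0 (Set.Ioi 0)))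
      (nhdsWithin 1 (Set.Iio 1)) (nhds 1))
    -- (iv)
    (hvp : Filter.Tendsto
      (fun r : ℝ => νp.totalVariation (Metric.ball x r) /
        (ENNReal.ofReal r * μ (Metric.ball x r)))
      (nhdsWithin 0 (Set.Ioi 0)) (nhds 0))
    (hvq : Filter.Tendsto
      (fun r : ℝ => νq.totalVariation (Metric.ball x r) /
        (ENNReal.ofReal r * μ (Metric.ball x r)))
      (nhdsWithin 0 (Set.Ioi 0)) (nhds 0)) :
    fderiv ℝ H x (EuclideanSpace.single p 1) = fderiv ℝ G x (EuclideanSpace.single q 1) := by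
  obtain ⟨hxΩ, hxA⟩ := hx
  set u : EuclideanSpace ℝ (Fin n) := EuclideanSpace.single p 1
  set v : EuclideanSpace ℝ (Fin n) := EuclideanSpace.single q 1
  have hcont {g : EuclideanSpace ℝ (Fin n) → ℝ} (hg : ContinuousOn g Ω) : ContinuousAt g x :=
    hg.continuousAt (hΩ.mem_nhds hxΩ)
  have hbd {g : EuclideanSpace ℝ (Fin n) → ℝ} (hg : ContinuousOn g Ω) :=
    (hcont hg).eventually_atTop_eventually_abs_le
  obtain ⟨C, hC0, hCf, hCG, hCH, hCH', hCG'⟩ := ((eventually_ge_atTop 0).and <|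
    (hbd hf.continuousOn).and <| (hbd hG.continuousOn).and <| (hbd hH.continuousOn).and <|
    (hbd (hH.continuousOn.sub (hf.continuousOn_fderiv_apply hΩ v))).and <|
    hbd (hG.continuousOn.sub (hf.continuousOn_fderiv_apply hΩ u))).exists
  obtain ⟨ρ, hρ0, hρ1, hdouble⟩ := exists_frequently_measure_ball_le_two_mul hσ
  obtain ⟨M, hM0, hbump⟩ := exists_rescaled_bump (E := EuclideanSpace ℝ (Fin n)) hρ0 hρ1
  set K := 2 * (4 * C * (1 + M) + 1)
  have hK : 0 < K := by positivity
  refine eq_of_forall_dist_le fun ε hε ↦ ?_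
  have hη : 0 < ε / K := by positivity
  have hnear := Eventually.and (hΩ.mem_nhds hxΩ) <|
    (hCf.and <| hCG.and <| hCH.and <| hCH'.and hCG').and <|
    (hcont ((hH.continuousOn_fderiv_apply hΩ u).sub (hG.continuousOn_fderiv_apply hΩ v))).eventually
      (closedBall_mem_nhds _ hη)
  obtain ⟨r, hdbl, hr, hball, htvp, htvq, hdiff⟩ := (hdouble.and_eventually <|
    Eventually.and (Ioc_mem_nhdsGT one_pos) <| hnear.eventually_forall_mem_ball.and <|
    (eventually_toReal_le_mul_measure_ball hvp hη).and <|
    (eventually_toReal_le_mul_measure_ball hvq hη).and <|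
    eventually_measureReal_ball_diff_le_of_mem_sdp hxA hη).exists
  obtain ⟨φ, hφ, hφs, hφsub, hφ01, hφ1, hDφ⟩ := hbump x r hr.1
  calc dist _ _ ≤ K * (ε / K) :=
        IsDistribDeriv.abs_sub_le_of_bump hνp hνq hf hG hH hΩ (by simp [u]) (by simp [v])
          (fun y hy ↦ hy.2) hr.1 hr.2 hφ hφs hφsub hφ01 hφ1 hM0 hDφ hball htvp htvq hdiff hdbl
          (ENNReal.toReal_pos (hxA.1 r hr.1).ne' measure_ball_lt_top.ne)
    _ = ε := mul_div_cancel₀ _ hK.ne'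

theorem stmt_19 {n : ℕ} (μ : Measure (EuclideanSpace ℝ (Fin n)))
    [IsLocallyFiniteMeasure μ] [μ.Regular]
    (Ω : Set (EuclideanSpace ℝ (Fin n))) (hΩ : IsOpen Ω)
    (f G H : EuclideanSpace ℝ (Fin n) → ℝ)
    (hf : ContDiffOn ℝ 1 f Ω) (hG : ContDiffOn ℝ 1 G Ω) (hH : ContDiffOn ℝ 1 H Ω)
    (p q : Fin n) (hpq : p < q)
    (x : EuclideanSpace ℝ (Fin n))
    (νp νq : SignedMeasure (EuclideanSpace ℝ (Fin n)))
    -- (i): `νp` is the `p`-th distributional derivative of `μ` (a Borel real measure)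
    (hνp : ∀ φ : EuclideanSpace ℝ (Fin n) → ℝ, ContDiff ℝ 1 φ → HasCompactSupport φ →
      ∫ y, fderiv ℝ φ y (EuclideanSpace.single p 1) ∂μ =
        -((∫ y, φ y ∂νp.toJordanDecomposition.posPart) -
          (∫ y, φ y ∂νp.toJordanDecomposition.negPart)))
    -- (i): `νq` is the `q`-th distributional derivative of `μ`
    (hνq : ∀ φ : EuclideanSpace ℝ (Fin n) → ℝ, ContDiff ℝ 1 φ → HasCompactSupport φ →
      ∫ y, fderiv ℝ φ y (EuclideanSpace.single q 1) ∂μ =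
        -((∫ y, φ y ∂νq.toJordanDecomposition.posPart) -
          (∫ y, φ y ∂νq.toJordanDecomposition.negPart)))
    -- (ii): `x` is a 1-superdensity point of the coincidence set `A`
    (hx : x ∈ Ω ∩ sdp μ 1 {y | y ∈ Ω ∧
      fderiv ℝ f y (EuclideanSpace.single p 1) = G y ∧
      fderiv ℝ f y (EuclideanSpace.single q 1) = H y})
    -- (iii)
    (hσ : Filter.Tendsto
      (fun ρ : ℝ => Filter.liminf
        (fun r : ℝ => μ (Metric.ball x r) / μ (Metric.ball x (ρ * r)))
        (nhdsWithin 0 (Set.Ioi 0)))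
      (nhdsWithin 1 (Set.Iio 1)) (nhds 1))
    -- (iv)
    (hvp : Filter.Tendsto
      (fun r : ℝ => νp.totalVariation (Metric.ball x r) /
        (ENNReal.ofReal r * μ (Metric.ball x r)))
      (nhdsWithin 0 (Set.Ioi 0)) (nhds 0))
    (hvq : Filter.Tendsto
      (fun r : ℝ => νq.totalVariation (Metric.ball x r) /
        (ENNReal.ofReal r * μ (Metric.ball x r)))
      (nhdsWithin 0 (Set.Ioi 0)) (nhds 0)) :
    fderiv ℝ H x (EuclideanSpace.single p 1) = fderiv ℝ G x (EuclideanSpace.single q 1) :=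
  stmt_19_general μ Ω hΩ f G H hf hG hH p q x νp νq hνp hνq hx hσ hvp hvq
end
end
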